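/- arXiv:1203.5263 — 6 statements merged into one kernel-verified Lean document; each statement's English description precedes it below -/
import Mathlib

section
/- With f as defined on [0,1] (tent functions toward e_n/n!), for every n, ∫_{1/2^{n+1}}^{1} f = ∑_{k=0}^{n} (1/k!)·e_k in C([0,1],ℝ). -/
/-!
On `[2^-(k+1), 2^-k]` the function `f` is a tent of slope `2^(2k+4)/k!` and half-width
`2^-(k+2)` in the direction `e_k`, so its integral there is `(1/k!) • e_k`. The dyadic intervals
with `k ≤ n` tile `[2^-(n+1), 1]`, and the integral over the union is the sum of these pieces.
-/

def eFun (n : ℕ) : C(Set.Icc (0:ℝ) 1, ℝ) :=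
  ⟨fun t => (t : ℝ) ^ n, (continuous_subtype_val.pow n)⟩

open MeasureTheory

open Set intervalIntegral

section Tent

variable {E : Type*} [NormedAddCommGroup E] [NormedSpace ℝ E]
  {f : ℝ → E} {g : ℝ → ℝ} {a m b c : ℝ} {v : E}

theorem IntervalIntegrable.of_eqOn_smul_const (hg : Continuous g)
    (h : EqOn f (fun x => g x • v) (uIcc a b)) : IntervalIntegrable f volume a b :=
  ((hg.smul continuous_const).continuousOn.congr h).intervalIntegrable

theorem integral_eq_integral_smul_const_of_eqOn [CompleteSpace E]
    (h : EqOn f (fun x => g x • v) (uIcc a b)) :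
    ∫ x in a..b, f x = (∫ x in a..b, g x) • v :=
  (integral_congr h).trans (integral_smul_const _ _)

theorem intervalIntegrable_of_piecewise_affine (ham : a ≤ m) (hmb : m ≤ b)
    (hup : ∀ x ∈ Icc a m, f x = (c * (x - a)) • v)
    (hdown : ∀ x ∈ Icc m b, f x = (c * (b - x)) • v) :
    IntervalIntegrable f volume a b := by
  rw [← uIcc_of_le ham] at hup
  rw [← uIcc_of_le hmb] at hdown
  exact (IntervalIntegrable.of_eqOn_smul_const (by fun_prop) hup).trans
    (IntervalIntegrable.of_eqOn_smul_const (by fun_prop) hdown)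

theorem integral_of_piecewise_affine [CompleteSpace E] (ham : a ≤ m) (hmb : m ≤ b)
    (hup : ∀ x ∈ Icc a m, f x = (c * (x - a)) • v)
    (hdown : ∀ x ∈ Icc m b, f x = (c * (b - x)) • v) :
    ∫ x in a..b, f x = (c * ((m - a) ^ 2 + (b - m) ^ 2) / 2) • v := by
  rw [← uIcc_of_le ham] at hup
  rw [← uIcc_of_le hmb] at hdown
  rw [← integral_add_adjacent_intervals (IntervalIntegrable.of_eqOn_smul_const (by fun_prop) hup)
      (IntervalIntegrable.of_eqOn_smul_const (by fun_prop) hdown),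
    integral_eq_integral_smul_const_of_eqOn hup, integral_eq_integral_smul_const_of_eqOn hdown,
    ← add_smul]
  congr 1
  simp only [intervalIntegral.integral_const_mul, integral_comp_sub_right (fun x => x),
    integral_comp_sub_left (fun x => x), integral_id]
  ring

theorem one_div_two_pow_succ_le_three_div_two_pow (k : ℕ) :
    (1 : ℝ) / 2 ^ (k + 1) ≤ 3 / 2 ^ (k + 2) := by
  rw [div_le_div_iff₀ (by positivity) (by positivity), pow_succ 2 (k + 1)]
  nlinarith [pow_pos (two_pos (α := ℝ)) (k + 1)]

theorem three_div_two_pow_le_one_div_two_pow (k : ℕ) :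
    (3 : ℝ) / 2 ^ (k + 2) ≤ 1 / 2 ^ k := by
  rw [div_le_div_iff₀ (by positivity) (by positivity), pow_add]
  nlinarith [pow_pos (two_pos (α := ℝ)) k]

theorem intervalIntegrable_dyadic_tent (k : ℕ)
    (hup : ∀ x ∈ Icc (1 / 2 ^ (k + 1)) (3 / 2 ^ (k + 2)),
      f x = (c * (x - 1 / 2 ^ (k + 1))) • v)
    (hdown : ∀ x ∈ Icc (3 / 2 ^ (k + 2)) (1 / 2 ^ k), f x = (c * (1 / 2 ^ k - x)) • v) :
    IntervalIntegrable f volume (1 / 2 ^ (k + 1)) (1 / 2 ^ k) :=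
  intervalIntegrable_of_piecewise_affine (one_div_two_pow_succ_le_three_div_two_pow k)
    (three_div_two_pow_le_one_div_two_pow k) hup hdown

theorem integral_dyadic_tent [CompleteSpace E] (k : ℕ)
    (hup : ∀ x ∈ Icc (1 / 2 ^ (k + 1)) (3 / 2 ^ (k + 2)),
      f x = (c * (x - 1 / 2 ^ (k + 1))) • v)
    (hdown : ∀ x ∈ Icc (3 / 2 ^ (k + 2)) (1 / 2 ^ k), f x = (c * (1 / 2 ^ k - x)) • v) :
    ∫ x in (1 / 2 ^ (k + 1))..(1 / 2 ^ k), f x = (c / 2 ^ (2 * k + 4)) • v := by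
  rw [integral_of_piecewise_affine (one_div_two_pow_succ_le_three_div_two_pow k)
    (three_div_two_pow_le_one_div_two_pow k) hup hdown]
  congr 1
  simp only [pow_add, pow_mul']
  field_simp
  ring

end Tent

theorem tent_integral_partial_sums_general (f : ℝ → C(Set.Icc (0:ℝ) 1, ℝ))
    (h1 : ∀ n : ℕ, ∀ x ∈ Set.Icc ((1:ℝ) / 2 ^ (n + 1)) (3 / 2 ^ (n + 2)),
      f x = ((2 ^ (2 * n + 4) / (n.factorial : ℝ)) * (x - 1 / 2 ^ (n + 1))) • eFun n)
    (h2 : ∀ n : ℕ, ∀ x ∈ Set.Icc ((3:ℝ) / 2 ^ (n + 2)) (1 / 2 ^ n),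
      f x = ((2 ^ (2 * n + 4) / (n.factorial : ℝ)) * (1 / 2 ^ n - x)) • eFun n)
    (n : ℕ) :
    (∫ x in ((1:ℝ) / 2 ^ (n + 1))..1, f x)
      = ∑ k ∈ Finset.range (n + 1), (1 / (k.factorial : ℝ)) • eFun k := by
  have hpiece (k : ℕ) :
      ∫ x in (1 / 2 ^ (k + 1))..(1 / 2 ^ k), f x = (1 / (k.factorial : ℝ)) • eFun k := by
    rw [integral_dyadic_tent (f := f) k (h1 k) (h2 k)]
    congr 1
    field_simp
  have htelescope := sum_integral_adjacent_intervals (a := fun k : ℕ => (1 : ℝ) / 2 ^ k)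
    (μ := volume) (n := n + 1) fun k _ =>
      (intervalIntegrable_dyadic_tent (f := f) k (h1 k) (h2 k)).symm
  rw [pow_zero, div_one] at htelescope
  rw [integral_symm, ← htelescope, ← Finset.sum_neg_distrib]
  exact Finset.sum_congr rfl fun k _ => by rw [← integral_symm, hpiece]

/-- For the tent construction `f`, for every `n`,
`∫_{1/2^(n+1)}^{1} f = ∑_{k=0}^{n} (1/k!) • e_k` in `C([0,1], ℝ)`. -/
theorem tent_integral_partial_sums (f : ℝ → C(Set.Icc (0:ℝ) 1, ℝ))
    (h0 : f 0 = 0)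
    (h1 : ∀ n : ℕ, ∀ x ∈ Set.Icc ((1:ℝ) / 2 ^ (n + 1)) (3 / 2 ^ (n + 2)),
      f x = ((2 ^ (2 * n + 4) / (n.factorial : ℝ)) * (x - 1 / 2 ^ (n + 1))) • eFun n)
    (h2 : ∀ n : ℕ, ∀ x ∈ Set.Icc ((3:ℝ) / 2 ^ (n + 2)) (1 / 2 ^ n),
      f x = ((2 ^ (2 * n + 4) / (n.factorial : ℝ)) * (1 / 2 ^ n - x)) • eFun n)
    (n : ℕ) :
    (∫ x in ((1:ℝ) / 2 ^ (n + 1))..1, f x)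
      = ∑ k ∈ Finset.range (n + 1), (1 / (k.factorial : ℝ)) • eFun k :=
  tent_integral_partial_sums_general f h1 h2 n
end

section
/- The function f : [0,1] → C([0,1],ℝ) constructed from the exponential series (tent functions on dyadic intervals) is Bochner integrable on [0,1] with ∫_{[0,1]} f = exp|_{[0,1]}, and consequently its integral over [0,1] does not lie in the subspace E of polynomial functions. -/
/-- The restriction of `exp` to `[0,1]` as an element of `C([0,1], ℝ)`. -/
noncomputable def expFun : C(Set.Icc (0:ℝ) 1, ℝ) :=
  ⟨fun t => Real.exp t, Real.continuous_exp.comp continuous_subtype_val⟩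

open MeasureTheory Set Filter Topology Function
open scoped Nat Polynomial

theorem Antitone.iUnion_Ioc_succ {α : Type*} [LinearOrder α] [TopologicalSpace α]
    [OrderTopology α] {u : ℕ → α} {a : α} (hu : Antitone u) (hlim : Tendsto u atTop (𝓝 a)) :
    ⋃ n, Ioc (u (n + 1)) (u n) = Ioc a (u 0) := by
  ext x
  simp only [mem_iUnion, mem_Ioc]
  constructor
  · rintro ⟨n, hlt, hle⟩
    exact ⟨(hu.le_of_tendsto hlim _).trans_lt hlt, hle.trans (hu (Nat.zero_le n))⟩
  · rintro ⟨hax, hx0⟩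
    have hex : ∃ n, u n < x := (hlim.eventually_lt_const hax).exists
    obtain ⟨k, hk⟩ : ∃ k, Nat.find hex = k + 1 :=
      Nat.exists_eq_succ_of_ne_zero fun h => (Nat.find_spec hex).not_ge (h ▸ hx0)
    exact ⟨k, hk ▸ Nat.find_spec hex, not_lt.1 (Nat.find_min hex (by omega))⟩

section Tent

variable {E : Type*} [NormedAddCommGroup E] [NormedSpace ℝ E]
  {f : ℝ → E} {a m b c : ℝ} {v : E}

theorem integrableOn_and_setIntegral_Ioc_of_eqOn_smul [CompleteSpace E] {g : ℝ → ℝ}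
    (hab : a ≤ b) (hg : Continuous g) (hf : EqOn f (fun x => g x • v) (Icc a b)) :
    IntegrableOn f (Ioc a b) ∧ ∫ x in Ioc a b, f x = (∫ x in a..b, g x) • v := by
  have hf' : EqOn (fun x => g x • v) f (Ioc a b) := fun x hx =>
    (hf (Ioc_subset_Icc_self hx)).symm
  refine ⟨(hg.smul continuous_const).integrableOn_Ioc.congr_fun hf' measurableSet_Ioc, ?_⟩
  rw [← setIntegral_congr_fun measurableSet_Ioc hf', integral_smul_const,
    intervalIntegral.integral_of_le hab]

theorem integrableOn_and_setIntegral_tent [CompleteSpace E] (ham : a ≤ m) (hmb : m ≤ b)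
    (hup : EqOn f (fun x => (c * (x - a)) • v) (Icc a m))
    (hdown : EqOn f (fun x => (c * (b - x)) • v) (Icc m b)) :
    IntegrableOn f (Ioc a b) ∧
      ∫ x in Ioc a b, f x = (c * ((m - a) ^ 2 + (b - m) ^ 2) / 2) • v := by
  obtain ⟨hf₁, heq₁⟩ := integrableOn_and_setIntegral_Ioc_of_eqOn_smul ham (by fun_prop) hup
  obtain ⟨hf₂, heq₂⟩ := integrableOn_and_setIntegral_Ioc_of_eqOn_smul hmb (by fun_prop) hdown
  rw [← Ioc_union_Ioc_eq_Ioc ham hmb]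
  refine ⟨hf₁.union hf₂, ?_⟩
  rw [setIntegral_union (Ioc_disjoint_Ioc_of_le le_rfl) measurableSet_Ioc hf₁ hf₂, heq₁, heq₂,
    ← add_smul, intervalIntegral.integral_comp_sub_right (fun x => c * x),
    intervalIntegral.integral_comp_sub_left (fun x => c * x), intervalIntegral.integral_const_mul,
    intervalIntegral.integral_const_mul, integral_id, integral_id]
  congr 1
  ring

theorem setIntegral_norm_tent (hc : 0 ≤ c) (ham : a ≤ m) (hmb : m ≤ b)
    (hup : EqOn f (fun x => (c * (x - a)) • v) (Icc a m))
    (hdown : EqOn f (fun x => (c * (b - x)) • v) (Icc m b)) :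
    ∫ x in Ioc a b, ‖f x‖ = c * ((m - a) ^ 2 + (b - m) ^ 2) / 2 * ‖v‖ := by
  refine (integrableOn_and_setIntegral_tent ham hmb (fun x hx => ?_) (fun x hx => ?_)).2
  · rw [hup hx, norm_smul, Real.norm_of_nonneg (mul_nonneg hc (sub_nonneg.2 hx.1))]; rfl
  · rw [hdown hx, norm_smul, Real.norm_of_nonneg (mul_nonneg hc (sub_nonneg.2 hx.2))]; rfl

end Tent

theorem integrableOn_and_setIntegral_dyadic_tent {E : Type*} [NormedAddCommGroup E]
    [NormedSpace ℝ E] [CompleteSpace E] {f : ℝ → E} {v : E} (n : ℕ)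
    (hup : ∀ x ∈ Icc ((1:ℝ) / 2 ^ (n + 1)) (3 / 2 ^ (n + 2)),
      f x = ((2 ^ (2 * n + 4) / (n ! : ℝ)) * (x - 1 / 2 ^ (n + 1))) • v)
    (hdown : ∀ x ∈ Icc ((3:ℝ) / 2 ^ (n + 2)) (1 / 2 ^ n),
      f x = ((2 ^ (2 * n + 4) / (n ! : ℝ)) * (1 / 2 ^ n - x)) • v) :
    IntegrableOn f (Ioc (1 / 2 ^ (n + 1)) (1 / 2 ^ n)) ∧
      ∫ x in Ioc (1 / 2 ^ (n + 1)) (1 / 2 ^ n), f x = (n ! : ℝ)⁻¹ • v ∧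
      ∫ x in Ioc (1 / 2 ^ (n + 1)) (1 / 2 ^ n), ‖f x‖ = ‖(n ! : ℝ)⁻¹ • v‖ := by
  have ham : (1:ℝ) / 2 ^ (n + 1) ≤ 3 / 2 ^ (n + 2) := by
    rw [pow_succ _ (n + 1)]; field_simp; norm_num
  have hmb : (3:ℝ) / 2 ^ (n + 2) ≤ 1 / 2 ^ n := by
    rw [pow_add]; field_simp; norm_num
  have hcoef : (2 ^ (2 * n + 4) / (n ! : ℝ)) * ((3 / 2 ^ (n + 2) - 1 / 2 ^ (n + 1)) ^ 2 +
      (1 / 2 ^ n - 3 / 2 ^ (n + 2)) ^ 2) / 2 = (n ! : ℝ)⁻¹ := by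
    field_simp; ring
  obtain ⟨hf, hf_eq⟩ := integrableOn_and_setIntegral_tent ham hmb hup hdown
  refine ⟨hf, by rw [hf_eq, hcoef], ?_⟩
  rw [setIntegral_norm_tent (by positivity) ham hmb hup hdown, hcoef, norm_smul,
    Real.norm_of_nonneg (by positivity)]

theorem norm_eFun_le_one (n : ℕ) : ‖eFun n‖ ≤ 1 :=
  (ContinuousMap.norm_le _ zero_le_one).2 fun t => by
    simpa [eFun, abs_of_nonneg t.2.1] using pow_le_one₀ t.2.1 t.2.2

theorem summable_norm_inv_factorial_smul_eFun :
    Summable fun n : ℕ => ‖(n ! : ℝ)⁻¹ • eFun n‖ := by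
  refine .of_nonneg_of_le (fun _ => norm_nonneg _) (fun n => ?_)
    (Real.summable_pow_div_factorial 1)
  rw [norm_smul, one_pow, one_div, Real.norm_of_nonneg (by positivity)]
  exact mul_le_of_le_one_right (by positivity) (norm_eFun_le_one n)

theorem hasSum_inv_factorial_smul_eFun : HasSum (fun n : ℕ => (n ! : ℝ)⁻¹ • eFun n) expFun := by
  have hs := summable_norm_inv_factorial_smul_eFun.of_norm
  suffices h : expFun = ∑' n : ℕ, (n ! : ℝ)⁻¹ • eFun n from h ▸ hs.hasSum
  ext t
  rw [← ContinuousMap.tsum_apply hs, expFun, ContinuousMap.coe_mk, Real.exp_eq_exp_ℝ,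
    NormedSpace.exp_eq_tsum_div]
  simp [eFun, div_eq_inv_mul]

theorem iterate_deriv_polynomial_eval {𝕜 : Type*} [NontriviallyNormedField 𝕜] (p : 𝕜[X])
    (k : ℕ) : deriv^[k] (fun x => p.eval x) = fun x => (Polynomial.derivative^[k] p).eval x := by
  induction k generalizing p with
  | zero => rfl
  | succ k ih =>
    have hderiv : deriv (fun x => p.eval x) = fun x => p.derivative.eval x :=
      funext fun _ => p.deriv
    rw [iterate_succ_apply, iterate_succ_apply, hderiv, ih]

theorem Real.not_exp_eventuallyEq_eval (p : ℝ[X]) (x : ℝ) :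
    ¬ Real.exp =ᶠ[𝓝 x] fun t => p.eval t := by
  intro h
  have hk := h.iteratedDeriv_eq (p.natDegree + 1)
  rw [iteratedDeriv_eq_iterate, iteratedDeriv_eq_iterate, Real.iter_deriv_exp,
    iterate_deriv_polynomial_eval, Polynomial.iterate_derivative_eq_zero (Nat.lt_succ_self _)] at hk
  exact (Real.exp_pos x).ne' (hk.trans Polynomial.eval_zero)

theorem expFun_ne_eval (p : ℝ[X]) : ¬ ∀ t : Icc (0 : ℝ) 1, expFun t = p.eval (t : ℝ) := by
  intro h
  refine Real.not_exp_eventuallyEq_eval p (1 / 2) ?_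
  filter_upwards [Icc_mem_nhds (by norm_num : (0 : ℝ) < 1 / 2) (by norm_num : (1 / 2 : ℝ) < 1)]
    with t ht using h ⟨t, ht⟩

theorem tent_integrable_integral_exp_general (f : ℝ → C(Set.Icc (0:ℝ) 1, ℝ))
    (h1 : ∀ n : ℕ, ∀ x ∈ Set.Icc ((1:ℝ) / 2 ^ (n + 1)) (3 / 2 ^ (n + 2)),
      f x = ((2 ^ (2 * n + 4) / (n.factorial : ℝ)) * (x - 1 / 2 ^ (n + 1))) • eFun n)
    (h2 : ∀ n : ℕ, ∀ x ∈ Set.Icc ((3:ℝ) / 2 ^ (n + 2)) (1 / 2 ^ n),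
      f x = ((2 ^ (2 * n + 4) / (n.factorial : ℝ)) * (1 / 2 ^ n - x)) • eFun n)
    :
    IntervalIntegrable f volume 0 1 ∧
    (∫ x in (0:ℝ)..1, f x) = expFun ∧
    ¬ ∃ p : Polynomial ℝ, ∀ t : Set.Icc (0:ℝ) 1,
        (∫ x in (0:ℝ)..1, f x) t = p.eval (t : ℝ) := by
  have hpiece n := integrableOn_and_setIntegral_dyadic_tent (f := f) n (h1 n) (h2 n)
  have hanti : Antitone fun n : ℕ => (1 : ℝ) / 2 ^ n := fun _ _ h =>
    one_div_le_one_div_of_le (by positivity) (pow_le_pow_right₀ one_le_two h)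
  have hcover : ⋃ n : ℕ, Ioc ((1 : ℝ) / 2 ^ (n + 1)) (1 / 2 ^ n) = Ioc 0 1 := by
    simpa using hanti.iUnion_Ioc_succ (a := 0) <|
      (tendsto_inv_atTop_zero.comp (tendsto_pow_atTop_atTop_of_one_lt one_lt_two)).congr
        fun n => (one_div _).symm
  have hintegrable : IntegrableOn f (Ioc 0 1) :=
    hcover ▸ integrableOn_iUnion_of_summable_integral_norm (fun n => (hpiece n).1)
      (by simpa only [(hpiece _).2.2] using summable_norm_inv_factorial_smul_eFun)
  have hdisj : Pairwise (Disjoint on fun n : ℕ => Ioc ((1 : ℝ) / 2 ^ (n + 1)) (1 / 2 ^ n)) :=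
    hanti.pairwise_disjoint_on_Ioc_succ
  have hsum := hasSum_integral_iUnion (fun _ => measurableSet_Ioc) hdisj (hcover ▸ hintegrable)
  have hval : ∫ x in (0:ℝ)..1, f x = expFun := by
    rw [intervalIntegral.integral_of_le zero_le_one, ← hcover]
    exact hsum.unique (by simpa only [(hpiece _).2.1] using hasSum_inv_factorial_smul_eFun)
  refine ⟨(intervalIntegrable_iff_integrableOn_Ioc_of_le zero_le_one).2 hintegrable, hval, ?_⟩
  rintro ⟨p, hp⟩
  exact expFun_ne_eval p (hval ▸ hp)

/-- The tent construction `f` is Bochner integrable on `[0,1]` with integral the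
restriction of `exp`, which is not a polynomial function. -/
theorem tent_integrable_integral_exp (f : ℝ → C(Set.Icc (0:ℝ) 1, ℝ))
    (h0 : f 0 = 0)
    (h1 : ∀ n : ℕ, ∀ x ∈ Set.Icc ((1:ℝ) / 2 ^ (n + 1)) (3 / 2 ^ (n + 2)),
      f x = ((2 ^ (2 * n + 4) / (n.factorial : ℝ)) * (x - 1 / 2 ^ (n + 1))) • eFun n)
    (h2 : ∀ n : ℕ, ∀ x ∈ Set.Icc ((3:ℝ) / 2 ^ (n + 2)) (1 / 2 ^ n),
      f x = ((2 ^ (2 * n + 4) / (n.factorial : ℝ)) * (1 / 2 ^ n - x)) • eFun n)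
    :
    IntervalIntegrable f volume 0 1 ∧
    (∫ x in (0:ℝ)..1, f x) = expFun ∧
    ¬ ∃ p : Polynomial ℝ, ∀ t : Set.Icc (0:ℝ) 1,
        (∫ x in (0:ℝ)..1, f x) t = p.eval (t : ℝ) :=
  tent_integrable_integral_exp_general f h1 h2
end

section
/- The odd extension F : [-1,1] → C([0,1],ℝ) of f (F(x) = f(x) for x ≥ 0, F(x) = −f(−x) for x < 0) is continuous and its Bochner integral over [-1,1] is the zero function, which is a polynomial; thus ∫_{[-1,1]} F lies in the subspace E of polynomial functions while ∫_{[0,1]} F does not. -/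
open MeasureTheory

open Set intervalIntegral Filter Polynomial

lemma antitone_one_div_two_pow : Antitone fun n : ℕ => (1:ℝ) / 2 ^ n :=
  fun _ _ h => one_div_le_one_div_of_le (by positivity) (pow_le_pow_right₀ one_le_two h)

lemma iUnion_Ioc_one_div_two_pow :
    ⋃ n : ℕ, Ioc ((1:ℝ) / 2 ^ (n + 1)) (1 / 2 ^ n) = Ioc 0 1 := by
  ext y
  simp only [mem_iUnion, mem_Ioc]
  constructor
  · rintro ⟨n, hn, hn'⟩
    exact ⟨(by positivity : (0:ℝ) < _).trans hn,
      hn'.trans (by simpa using antitone_one_div_two_pow n.zero_le)⟩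
  · rintro ⟨hy, hy'⟩
    obtain ⟨n, hn, hn'⟩ := exists_nat_pow_near (one_le_one_div hy hy') one_lt_two
    refine ⟨n, ?_, ?_⟩
    · rwa [div_lt_iff₀ (by positivity), ← div_lt_iff₀' hy]
    · rwa [le_div_iff₀ (by positivity), ← le_div_iff₀' hy]

lemma exists_mem_Ioc_one_div_two_pow {y : ℝ} (hy : y ∈ Ioc 0 1) :
    ∃ n : ℕ, y ∈ Ioc (1 / 2 ^ (n + 1)) (1 / 2 ^ n) :=
  mem_iUnion.1 (iUnion_Ioc_one_div_two_pow ▸ hy)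

lemma pairwise_disjoint_Ioc_one_div_two_pow :
    Pairwise (Function.onFun Disjoint fun n : ℕ => Ioc ((1:ℝ) / 2 ^ (n + 1)) (1 / 2 ^ n)) :=
  antitone_one_div_two_pow.pairwise_disjoint_on_Ioc_succ

lemma integral_mul_sub_left (c a b : ℝ) : ∫ x in a..b, c * (x - a) = c * (b - a) ^ 2 / 2 := by
  simp
  ring

lemma integral_mul_sub_right (c a b : ℝ) : ∫ x in a..b, c * (b - x) = c * (b - a) ^ 2 / 2 := by
  rw [intervalIntegral.integral_const_mul, integral_comp_sub_left (fun x => x)]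
  simp
  ring

lemma norm_smul_eFun_le (r : ℝ) (n : ℕ) : ‖r • eFun n‖ ≤ |r| := by
  refine (ContinuousMap.norm_le _ (abs_nonneg r)).2 fun t => ?_
  have ht : |(t : ℝ) ^ n| ≤ 1 := by
    rw [abs_of_nonneg (pow_nonneg t.2.1 n)]
    exact pow_le_one₀ t.2.1 t.2.2
  simpa [eFun, abs_mul] using mul_le_of_le_one_right (abs_nonneg r) ht

lemma one_div_two_pow_succ_le_three_div (n : ℕ) : (1:ℝ) / 2 ^ (n + 1) ≤ 3 / 2 ^ (n + 2) := by
  rw [div_le_div_iff₀ (by positivity) (by positivity), pow_succ]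
  nlinarith [pow_pos (two_pos : (0:ℝ) < 2) (n + 1)]

lemma three_div_le_one_div_two_pow (n : ℕ) : (3:ℝ) / 2 ^ (n + 2) ≤ 1 / 2 ^ n := by
  rw [div_le_div_iff₀ (by positivity) (by positivity), pow_add]
  nlinarith [pow_pos (two_pos : (0:ℝ) < 2) n]

namespace TentConstruction

variable {f : ℝ → C(Icc (0:ℝ) 1, ℝ)}
  (h1 : ∀ n : ℕ, ∀ x ∈ Icc ((1:ℝ) / 2 ^ (n + 1)) (3 / 2 ^ (n + 2)),
    f x = ((2 ^ (2 * n + 4) / (n.factorial : ℝ)) * (x - 1 / 2 ^ (n + 1))) • eFun n)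
  (h2 : ∀ n : ℕ, ∀ x ∈ Icc ((3:ℝ) / 2 ^ (n + 2)) (1 / 2 ^ n),
    f x = ((2 ^ (2 * n + 4) / (n.factorial : ℝ)) * (1 / 2 ^ n - x)) • eFun n)
include h1 h2

lemma continuousOn_Icc_dyadic (n : ℕ) : ContinuousOn f (Icc (1 / 2 ^ (n + 1)) (1 / 2 ^ n)) := by
  rw [← Icc_union_Icc_eq_Icc (one_div_two_pow_succ_le_three_div n)
    (three_div_le_one_div_two_pow n)]
  exact .union_of_isClosed (ContinuousOn.congr (by fun_prop) (h1 n))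
    (ContinuousOn.congr (by fun_prop) (h2 n)) isClosed_Icc isClosed_Icc

lemma continuousOn_Icc_one_div_two_pow_one (n : ℕ) :
    ContinuousOn f (Icc (1 / 2 ^ (n + 1)) 1) := by
  induction n with
  | zero => simpa using continuousOn_Icc_dyadic h1 h2 0
  | succ n ih =>
    rw [← Icc_union_Icc_eq_Icc (antitone_one_div_two_pow (n + 1).le_succ)
      (by simpa using antitone_one_div_two_pow (n + 1).zero_le)]
    exact (continuousOn_Icc_dyadic h1 h2 (n + 1)).union_of_isClosed ih isClosed_Icc isClosed_Icc

lemma norm_le_of_mem_Icc_dyadic (n : ℕ) {x : ℝ} (hx : x ∈ Icc (1 / 2 ^ (n + 1)) (1 / 2 ^ n)) :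
    ‖f x‖ ≤ 8 * (2 ^ n / n.factorial) := by
  have hlen : (1:ℝ) / 2 ^ n - 1 / 2 ^ (n + 1) = 1 / 2 ^ (n + 1) := by field_simp; ring
  have hc : (0:ℝ) ≤ 2 ^ (2 * n + 4) / n.factorial := by positivity
  calc ‖f x‖ ≤ 2 ^ (2 * n + 4) / n.factorial * (1 / 2 ^ (n + 1)) := by
        rcases le_total x (3 / 2 ^ (n + 2)) with hm | hm
        · rw [h1 n x ⟨hx.1, hm⟩]
          refine (norm_smul_eFun_le _ n).trans ?_
          rw [abs_of_nonneg (mul_nonneg hc (by linarith [hx.1]))]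
          gcongr
          linarith [hx.2]
        · rw [h2 n x ⟨hm, hx.2⟩]
          refine (norm_smul_eFun_le _ n).trans ?_
          rw [abs_of_nonneg (mul_nonneg hc (by linarith [hx.2]))]
          gcongr
          linarith [hx.1]
    _ = 8 * (2 ^ n / n.factorial) := by field_simp; ring

lemma continuousWithinAt_zero (h0 : f 0 = 0) : ContinuousWithinAt f (Icc 0 1) 0 := by
  rw [Metric.continuousWithinAt_iff, h0]
  intro ε hε
  obtain ⟨N, hN⟩ := eventually_atTop.1 <|
    ((FloorSemiring.tendsto_pow_div_factorial_atTop (2:ℝ)).const_mul 8).eventually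
      (gt_mem_nhds (by simpa using hε))
  refine ⟨1 / 2 ^ N, by positivity, fun {x} hx hxN => ?_⟩
  rw [dist_zero_right]
  rcases hx.1.eq_or_lt with rfl | hx0
  · simpa [h0] using hε
  obtain ⟨n, hn⟩ := exists_mem_Ioc_one_div_two_pow ⟨hx0, hx.2⟩
  have hNn : N < n + 1 := antitone_one_div_two_pow.reflect_lt <|
    hn.1.trans (by simpa [abs_of_pos hx0] using hxN)
  exact (norm_le_of_mem_Icc_dyadic h1 h2 n (Ioc_subset_Icc_self hn)).trans_lt (hN n (by omega))

lemma continuousOn_Icc_zero_one (h0 : f 0 = 0) : ContinuousOn f (Icc 0 1) := by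
  intro x hx
  rcases hx.1.eq_or_lt with rfl | hx0
  · exact continuousWithinAt_zero h1 h2 h0
  obtain ⟨n, hn⟩ := exists_mem_Ioc_one_div_two_pow ⟨hx0, hx.2⟩
  have hlt : (1:ℝ) / 2 ^ (n + 2) < x := (antitone_one_div_two_pow (n + 1).le_succ).trans_lt hn.1
  refine (continuousOn_Icc_one_div_two_pow_one h1 h2 (n + 1) x ⟨hlt.le, hx.2⟩
    |>.mono_of_mem_nhdsWithin ?_)
  filter_upwards [self_mem_nhdsWithin, nhdsWithin_le_nhds (Ioi_mem_nhds hlt)] with y hy hy'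
  exact ⟨le_of_lt hy', hy.2⟩

lemma integral_Icc_dyadic (n : ℕ) :
    ∫ x in (1 / 2 ^ (n + 1) : ℝ)..1 / 2 ^ n, f x = (n.factorial : ℝ)⁻¹ • eFun n := by
  have ha := one_div_two_pow_succ_le_three_div n
  have hb := three_div_le_one_div_two_pow n
  have hint := continuousOn_Icc_dyadic h1 h2 n
  have e1 : ∫ x in (1 / 2 ^ (n + 1) : ℝ)..3 / 2 ^ (n + 2), f x =
      (∫ x in (1 / 2 ^ (n + 1) : ℝ)..3 / 2 ^ (n + 2),
        2 ^ (2 * n + 4) / (n.factorial : ℝ) * (x - 1 / 2 ^ (n + 1))) • eFun n :=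
    (integral_congr (by rw [uIcc_of_le ha]; exact h1 n)).trans
    (intervalIntegral.integral_smul_const _ _)
  have e2 : ∫ x in (3 / 2 ^ (n + 2) : ℝ)..1 / 2 ^ n, f x =
      (∫ x in (3 / 2 ^ (n + 2) : ℝ)..1 / 2 ^ n,
        2 ^ (2 * n + 4) / (n.factorial : ℝ) * (1 / 2 ^ n - x)) • eFun n :=
    (integral_congr (by rw [uIcc_of_le hb]; exact h2 n)).trans
    (intervalIntegral.integral_smul_const _ _)
  rw [← integral_add_adjacent_intervals
      ((hint.mono (Icc_subset_Icc le_rfl hb)).intervalIntegrable_of_Icc ha)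
      ((hint.mono (Icc_subset_Icc ha le_rfl)).intervalIntegrable_of_Icc hb),
    e1, e2, integral_mul_sub_left, integral_mul_sub_right, ← add_smul]
  congr 1
  field_simp
  ring

lemma hasSum_integral_Icc_dyadic (h0 : f 0 = 0) :
    HasSum (fun n : ℕ => (n.factorial : ℝ)⁻¹ • eFun n) (∫ x in (0:ℝ)..1, f x) := by
  have hint : IntegrableOn f (⋃ n : ℕ, Ioc ((1:ℝ) / 2 ^ (n + 1)) (1 / 2 ^ n)) := by
    rw [iUnion_Ioc_one_div_two_pow]
    exact (continuousOn_Icc_zero_one h1 h2 h0).integrableOn_Icc.mono_set Ioc_subset_Icc_self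
  have hsum := hasSum_integral_iUnion (fun _ => measurableSet_Ioc)
    pairwise_disjoint_Ioc_one_div_two_pow hint
  rw [iUnion_Ioc_one_div_two_pow, ← integral_of_le zero_le_one] at hsum
  refine hsum.congr_fun fun n => ?_
  rw [← integral_of_le (antitone_one_div_two_pow n.le_succ), integral_Icc_dyadic h1 h2]

lemma integral_apply_eq_exp (h0 : f 0 = 0) (t : Icc (0:ℝ) 1) :
    (∫ x in (0:ℝ)..1, f x) t = Real.exp t := by
  refine ((hasSum_integral_Icc_dyadic h1 h2 h0).mapL (ContinuousMap.evalCLM ℝ t)).unique ?_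
  simpa [eFun, Real.exp_eq_exp_ℝ, div_eq_inv_mul] using
    NormedSpace.expSeries_div_hasSum_exp (t : ℝ)

end TentConstruction

section OddExtension

variable {E : Type*} [NormedAddCommGroup E] {g F : ℝ → E} {a : ℝ}
    (ha : 0 ≤ a) (hg : ContinuousOn g (Icc 0 a))
    (hF₁ : ∀ x ∈ Icc 0 a, F x = g x) (hF₂ : ∀ x ∈ Icc (-a) 0, F x = -g (-x))
include ha hg hF₁ hF₂

lemma continuousOn_of_odd_extension : ContinuousOn F (Icc (-a) a) := by
  have hneg : ContinuousOn (fun x => -g (-x)) (Icc (-a) 0) :=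
    (hg.comp continuousOn_neg fun x hx => ⟨neg_nonneg.2 hx.2, neg_le.1 hx.1⟩).neg
  rw [← Icc_union_Icc_eq_Icc (neg_nonpos.2 ha) ha]
  exact (hneg.congr hF₂).union_of_isClosed (hg.congr hF₁) isClosed_Icc isClosed_Icc

lemma integral_of_odd_extension_eq_zero [NormedSpace ℝ E] [CompleteSpace E] :
    ∫ x in -a..a, F x = 0 := by
  have hF := continuousOn_of_odd_extension ha hg hF₁ hF₂
  rw [← integral_add_adjacent_intervals
      ((hF.mono (Icc_subset_Icc le_rfl ha)).intervalIntegrable_of_Icc (neg_nonpos.2 ha))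
      ((hF.mono (Icc_subset_Icc (neg_nonpos.2 ha) le_rfl)).intervalIntegrable_of_Icc ha),
    integral_congr (g := fun x => -g (-x)) (by rwa [uIcc_of_le (neg_nonpos.2 ha)]),
    integral_congr (a := 0) (g := g) (by rwa [uIcc_of_le ha]),
    intervalIntegral.integral_neg, integral_comp_neg, neg_zero, neg_neg, neg_add_cancel]

end OddExtension

theorem Polynomial.not_eqOn_exp_eval {s : Set ℝ} (hs : (interior s).Nonempty) (p : ℝ[X]) :
    ¬ EqOn Real.exp (fun x => p.eval x) s := by
  intro h
  obtain ⟨x, hx⟩ := hs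
  have key : ∀ k, EqOn Real.exp (fun y => (derivative^[k] p).eval y) (interior s) := by
    intro k
    induction k with
    | zero => exact h.mono interior_subset
    | succ k ih =>
      intro y hy
      simpa only [Real.deriv_exp, Polynomial.deriv, Function.iterate_succ_apply'] using
        ih.deriv isOpen_interior hy
  have := key (p.natDegree + 1) hx
  simp only [iterate_derivative_eq_zero p.natDegree.lt_succ_self, eval_zero] at this
  exact (Real.exp_pos x).ne' this

/-- The odd extension `F` of the tent construction is continuous on `[-1,1]`, its
Bochner integral over `[-1,1]` is the zero function (a polynomial), while its
integral over `[0,1]` is not a polynomial function. -/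
theorem odd_extension_integral (f F : ℝ → C(Set.Icc (0:ℝ) 1, ℝ))
    (h0 : f 0 = 0)
    (h1 : ∀ n : ℕ, ∀ x ∈ Set.Icc ((1:ℝ) / 2 ^ (n + 1)) (3 / 2 ^ (n + 2)),
      f x = ((2 ^ (2 * n + 4) / (n.factorial : ℝ)) * (x - 1 / 2 ^ (n + 1))) • eFun n)
    (h2 : ∀ n : ℕ, ∀ x ∈ Set.Icc ((3:ℝ) / 2 ^ (n + 2)) (1 / 2 ^ n),
      f x = ((2 ^ (2 * n + 4) / (n.factorial : ℝ)) * (1 / 2 ^ n - x)) • eFun n)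
    (hF1 : ∀ x ∈ Set.Icc (0:ℝ) 1, F x = f x)
    (hF2 : ∀ x ∈ Set.Icc (-1:ℝ) 0, F x = - f (-x)) :
    ContinuousOn F (Set.Icc (-1) 1) ∧
    (∫ x in (-1:ℝ)..1, F x) = 0 ∧
    (∃ p : Polynomial ℝ, ∀ t : Set.Icc (0:ℝ) 1,
        (∫ x in (-1:ℝ)..1, F x) t = p.eval (t : ℝ)) ∧
    ¬ ∃ p : Polynomial ℝ, ∀ t : Set.Icc (0:ℝ) 1,
        (∫ x in (0:ℝ)..1, F x) t = p.eval (t : ℝ) := by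
  have hf := TentConstruction.continuousOn_Icc_zero_one h1 h2 h0
  have hzero : ∫ x in (-1:ℝ)..1, F x = 0 :=
    integral_of_odd_extension_eq_zero zero_le_one hf hF1 hF2
  have hpos : ∫ x in (0:ℝ)..1, F x = ∫ x in (0:ℝ)..1, f x :=
    integral_congr (by rwa [uIcc_of_le zero_le_one])
  refine ⟨continuousOn_of_odd_extension zero_le_one hf hF1 hF2, hzero,
    ⟨0, fun t => by simp [hzero]⟩, ?_⟩
  rintro ⟨p, hp⟩
  refine Polynomial.not_eqOn_exp_eval (s := Icc 0 1) (by simp) p fun x hx => ?_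
  rw [← TentConstruction.integral_apply_eq_exp h1 h2 h0 ⟨x, hx⟩, ← hpos, hp ⟨x, hx⟩]
end

section
/- Let E be a real normed space, (x_n) a sequence in E with x_0 = 0 and ‖x_n − x_{n−1}‖ ≤ 1/2^{2n} for n ≥ 2. Define f : [0,1] → E with f(0) = 0 and, on [1/2^n, 1/2^{n−1}], the tent function f(x) = 2^{2n+2}(x − 1/2^n)(x_n − x_{n−1}) for x ∈ [1/2^n, 3/2^{n+1}] and f(x) = 2^{2n+2}(4/2^{n+1} − x)(x_n − x_{n−1}) for x ∈ [3/2^{n+1}, 4/2^{n+1}] (with the appropriate normalization on [1/2,1]). Then f is continuous on [0,1]. -/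
/-! On `[1/2^n, 1/2^(n-1)]` the function `f` is a tent of slope `2^(2n+2)` and half-width
`1/2^(n+1)` in the direction `x_n - x_(n-1)`, hence continuous there and of norm at most
`2^(n+1) ‖x_n - x_(n-1)‖ ≤ 2/2^n ≤ 2x`. The pieces glue to continuity on `(0,1]`, and the
bound `‖f x‖ ≤ 2x` gives continuity at `0`. -/

open Set Filter Topology

lemma eqOn_tent {M : Type*} [SMul ℝ M] {f : ℝ → M} {a b c K : ℝ} {d : M}
    (hmid : c - a = b - c) (hl : ∀ x ∈ Icc a c, f x = (K * (x - a)) • d)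
    (hr : ∀ x ∈ Icc c b, f x = (K * (b - x)) • d) :
    EqOn f (fun x ↦ (K * min (x - a) (b - x)) • d) (Icc a b) := by
  rintro x ⟨hax, hxb⟩
  dsimp only
  rcases le_total x c with hxc | hcx
  · rw [hl x ⟨hax, hxc⟩, min_eq_left (by linarith)]
  · rw [hr x ⟨hcx, hxb⟩, min_eq_right (by linarith)]

section Tent

variable {E : Type*} [NormedAddCommGroup E] [NormedSpace ℝ E] {f : ℝ → E} {a b c K : ℝ} {d : E}

lemma continuousOn_tent (hmid : c - a = b - c) (hl : ∀ x ∈ Icc a c, f x = (K * (x - a)) • d)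
    (hr : ∀ x ∈ Icc c b, f x = (K * (b - x)) • d) : ContinuousOn f (Icc a b) :=
  (by fun_prop : Continuous fun x ↦ (K * min (x - a) (b - x)) • d).continuousOn.congr
    (eqOn_tent hmid hl hr)

lemma norm_le_tent {h : ℝ} (hK : 0 ≤ K) (hca : c - a = h) (hbc : b - c = h)
    (hl : ∀ x ∈ Icc a c, f x = (K * (x - a)) • d) (hr : ∀ x ∈ Icc c b, f x = (K * (b - x)) • d)
    {x : ℝ} (hx : x ∈ Icc a b) : ‖f x‖ ≤ K * h * ‖d‖ := by
  have hmin_nonneg : 0 ≤ min (x - a) (b - x) := le_min (by linarith [hx.1]) (by linarith [hx.2])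
  have hmin_le : min (x - a) (b - x) ≤ h := by
    rcases le_total x c with hxc | hcx
    · exact (min_le_left _ _).trans (by linarith)
    · exact (min_le_right _ _).trans (by linarith)
  rw [eqOn_tent (hca.trans hbc.symm) hl hr hx, norm_smul, Real.norm_of_nonneg (by positivity)]
  gcongr

end Tent

lemma continuousOn_Icc_of_antitone {β : Type*} [TopologicalSpace β] {f : ℝ → β} {a : ℕ → ℝ}
    (ha : Antitone a) (hf : ∀ m, ContinuousOn f (Icc (a (m + 1)) (a m))) (N : ℕ) :
    ContinuousOn f (Icc (a N) (a 0)) := by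
  induction N with
  | zero => simp
  | succ N ih =>
    rw [← Icc_union_Icc_eq_Icc (ha N.le_succ) (ha N.zero_le)]
    exact (hf N).union_of_isClosed ih isClosed_Icc isClosed_Icc

lemma continuousOn_Icc_of_tendsto_antitone {β : Type*} [TopologicalSpace β] {f : ℝ → β}
    {a : ℕ → ℝ} {c : ℝ} (ha : Antitone a) (hac : Tendsto a atTop (𝓝 c))
    (hf : ∀ m, ContinuousOn f (Icc (a (m + 1)) (a m)))
    (hfc : ContinuousWithinAt f (Icc c (a 0)) c) : ContinuousOn f (Icc c (a 0)) := by
  intro x hx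
  rcases hx.1.eq_or_lt with rfl | hcx
  · exact hfc
  obtain ⟨N, hN⟩ := (hac.eventually (gt_mem_nhds hcx)).exists
  refine (continuousOn_Icc_of_antitone ha hf N x ⟨hN.le, hx.2⟩).mono_of_mem_nhdsWithin ?_
  filter_upwards [self_mem_nhdsWithin, mem_nhdsWithin_of_mem_nhds (Ioi_mem_nhds hN)]
    with y hy hNy using ⟨hNy.le, hy.2⟩

lemma continuousWithinAt_zero_of_norm_le_mul {E : Type*} [SeminormedAddCommGroup E] {f : ℝ → E}
    {C δ : ℝ} (hδ : 0 < δ) (h0 : f 0 = 0) (hf : ∀ x ∈ Ioc 0 δ, ‖f x‖ ≤ C * x) :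
    ContinuousWithinAt f (Ici 0) 0 := by
  have hC : Tendsto (fun x : ℝ ↦ C * x) (𝓝[Ici 0] 0) (𝓝 0) := by
    simpa using ((continuous_const_mul C).tendsto 0).mono_left nhdsWithin_le_nhds
  rw [ContinuousWithinAt, h0]
  refine squeeze_zero_norm' ?_ hC
  filter_upwards [self_mem_nhdsWithin, mem_nhdsWithin_of_mem_nhds (Iic_mem_nhds hδ)]
    with x (hx : 0 ≤ x) (hxδ : x ≤ δ)
  rcases hx.eq_or_lt with rfl | hx
  · simp [h0]
  · exact hf x ⟨hx, hxδ⟩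

lemma le_mul_of_forall_dyadic_le {g : ℝ → ℝ} {C : ℝ} (hC : 0 ≤ C)
    (hg : ∀ m : ℕ, ∀ x ∈ Icc ((1:ℝ) / 2 ^ (m + 2)) (1 / 2 ^ (m + 1)), g x ≤ C / 2 ^ (m + 2)) :
    ∀ x ∈ Ioc (0:ℝ) (1 / 2), g x ≤ C * x := by
  intro x ⟨hx0, hx⟩
  obtain ⟨m, hlo, hhi⟩ := exists_nat_pow_near_of_lt_one (x := 2 * x) (y := 1 / 2) (by positivity)
    (by linarith) (by norm_num) (by norm_num)
  rw [one_div_pow] at hlo hhi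
  have hlo' : 1 / 2 ^ (m + 2) ≤ x := by
    have : (1:ℝ) / 2 ^ (m + 2) = 1 / 2 ^ (m + 1) / 2 := by ring
    linarith
  have hhi' : x ≤ 1 / 2 ^ (m + 1) := by
    have : (1:ℝ) / 2 ^ (m + 1) = 1 / 2 ^ m / 2 := by ring
    linarith
  calc g x ≤ C / 2 ^ (m + 2) := hg m x ⟨hlo', hhi'⟩
    _ = C * (1 / 2 ^ (m + 2)) := by ring
    _ ≤ C * x := by gcongr

lemma four_div_two_pow_add_two (m : ℕ) : (4:ℝ) / 2 ^ (m + 2) = 1 / 2 ^ m := by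
  ring

lemma three_div_two_pow_succ_sub (n : ℕ) :
    (3:ℝ) / 2 ^ (n + 1) - 1 / 2 ^ n = 1 / 2 ^ (n + 1) := by
  ring

lemma four_div_two_pow_succ_sub (n : ℕ) :
    (4:ℝ) / 2 ^ (n + 1) - 3 / 2 ^ (n + 1) = 1 / 2 ^ (n + 1) := by
  ring

theorem general_tent_continuousOn_general {E : Type*} [NormedAddCommGroup E] [NormedSpace ℝ E]
    (xs : ℕ → E) (f : ℝ → E)
    (h0 : f 0 = 0)
    (h1 : ∀ n : ℕ, 1 ≤ n → ∀ x ∈ Set.Icc ((1:ℝ) / 2 ^ n) (3 / 2 ^ (n + 1)),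
      f x = ((2 ^ (2 * n + 2) : ℝ) * (x - 1 / 2 ^ n)) • (xs n - xs (n - 1)))
    (h2 : ∀ n : ℕ, 1 ≤ n → ∀ x ∈ Set.Icc ((3:ℝ) / 2 ^ (n + 1)) (4 / 2 ^ (n + 1)),
      f x = ((2 ^ (2 * n + 2) : ℝ) * (4 / 2 ^ (n + 1) - x)) • (xs n - xs (n - 1)))
    (hxs : ∀ n : ℕ, 2 ≤ n → ‖xs n - xs (n - 1)‖ ≤ 1 / 2 ^ (2 * n))
    :
    ContinuousOn f (Set.Icc 0 1) := by
  have hpiece (m : ℕ) : ContinuousOn f (Icc (1 / 2 ^ (m + 1)) (1 / 2 ^ m)) := by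
    rw [← four_div_two_pow_add_two m]
    exact continuousOn_tent
      ((three_div_two_pow_succ_sub _).trans (four_div_two_pow_succ_sub _).symm)
      (h1 (m + 1) (by omega)) (h2 (m + 1) (by omega))
  have hsmall : ∀ x ∈ Ioc (0:ℝ) (1 / 2), ‖f x‖ ≤ 2 * x := by
    refine le_mul_of_forall_dyadic_le (g := fun x ↦ ‖f x‖) zero_le_two fun m x hx ↦ ?_
    rw [← four_div_two_pow_add_two (m + 1)] at hx
    calc ‖f x‖
        ≤ 2 ^ (2 * (m + 2) + 2) * (1 / 2 ^ (m + 2 + 1)) * ‖xs (m + 2) - xs (m + 2 - 1)‖ :=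
          norm_le_tent (by positivity) (three_div_two_pow_succ_sub _) (four_div_two_pow_succ_sub _)
            (h1 _ (by omega)) (h2 _ (by omega)) hx
      _ ≤ 2 ^ (2 * (m + 2) + 2) * (1 / 2 ^ (m + 2 + 1)) * (1 / 2 ^ (2 * (m + 2))) := by
          gcongr
          exact hxs _ (by omega)
      _ = 2 / 2 ^ (m + 2) := by field_simp; ring
  have hzero : ContinuousWithinAt f (Icc 0 1) 0 :=
    (continuousWithinAt_zero_of_norm_le_mul one_half_pos h0 hsmall).mono Icc_subset_Ici_self
  have hanti : Antitone fun m : ℕ ↦ (1:ℝ) / 2 ^ m :=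
    fun _ _ h ↦ one_div_pow_le_one_div_pow_of_le one_le_two h
  have htends : Tendsto (fun m : ℕ ↦ (1:ℝ) / 2 ^ m) atTop (𝓝 0) := by
    simpa using tendsto_pow_atTop_nhds_zero_of_lt_one (r := (1:ℝ) / 2) (by norm_num) (by norm_num)
  simpa using continuousOn_Icc_of_tendsto_antitone hanti htends hpiece (by simpa using hzero)

/-- The tent-function construction toward a Cauchy sequence `(x_n)` in a real
normed space `E` is continuous on `[0,1]`. -/
theorem general_tent_continuousOn {E : Type*} [NormedAddCommGroup E] [NormedSpace ℝ E]
    (xs : ℕ → E) (f : ℝ → E)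
    (h0 : f 0 = 0) (hx0 : xs 0 = 0)
    (h1 : ∀ n : ℕ, 1 ≤ n → ∀ x ∈ Set.Icc ((1:ℝ) / 2 ^ n) (3 / 2 ^ (n + 1)),
      f x = ((2 ^ (2 * n + 2) : ℝ) * (x - 1 / 2 ^ n)) • (xs n - xs (n - 1)))
    (h2 : ∀ n : ℕ, 1 ≤ n → ∀ x ∈ Set.Icc ((3:ℝ) / 2 ^ (n + 1)) (4 / 2 ^ (n + 1)),
      f x = ((2 ^ (2 * n + 2) : ℝ) * (4 / 2 ^ (n + 1) - x)) • (xs n - xs (n - 1)))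
    (hxs : ∀ n : ℕ, 2 ≤ n → ‖xs n - xs (n - 1)‖ ≤ 1 / 2 ^ (2 * n))
    :
    ContinuousOn f (Set.Icc 0 1) :=
  general_tent_continuousOn_general xs f h0 h1 h2 hxs
end

section
/- If E is a complete real normed vector space, then every continuous function f : [a,b] → E is Riemann (hence Bochner) integrable on [a,b]; if E is not complete, there exists a continuous f : [0,1] → E which is not integrable on [0,1]. Thus 'continuous on a segment implies integrable on that segment' holds for E-valued functions if and only if E is complete. -/
/-!
In a complete space, the Riemann sums of a function that varies by at most `η` on every cell of
the partition are within `η (b - a)` of its Bochner integral.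

If `E` is not complete, pick a non-summable series `∑ vₖ` with `‖vₖ‖ < 4⁻ᵏ` and put `vₖ` on a bump
of integral one supported in `(1 - 3rₖ, 1 - rₖ)`, `rₖ = 2⁻ᵏ / 4`. The sup norms of the terms are
`O(2⁻ᵏ)`, so in the completion `Ê` the series is a uniformly convergent series of continuous
functions, which may be integrated term by term; each point meets only finitely many bumps, so the
sum takes values in `E`. A Riemann integral `y ∈ E` would also be the Bochner integral in `Ê`,
that is, `∑ vₖ = y`.
-/

open Filter Topology

/-- `HasRiemannIntegral f a b y` : the Riemann sums of `f` over tagged partitions of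
`[a, b]` converge to `y ∈ E` as the mesh tends to `0`. -/
def HasRiemannIntegral {E : Type*} [NormedAddCommGroup E] [NormedSpace ℝ E]
    (f : ℝ → E) (a b : ℝ) (y : E) : Prop :=
  ∀ ε > 0, ∃ δ > 0, ∀ (n : ℕ) (p t : ℕ → ℝ),
    p 0 = a → p n = b → (∀ i < n, p i < p (i + 1)) →
    (∀ i < n, p (i + 1) - p i < δ) →
    (∀ i < n, t i ∈ Set.Icc (p i) (p (i + 1))) →
    ‖(∑ i ∈ Finset.range n, (p (i + 1) - p i) • f (t i)) - y‖ < ε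

open Set MeasureTheory UniformSpace

section Riemann

variable {E : Type*} [NormedAddCommGroup E] [NormedSpace ℝ E] {f : ℝ → E} {a b : ℝ}

lemma norm_smul_sub_integral_le [CompleteSpace E] {s t c ε : ℝ} (hst : s ≤ t)
    (hf : IntervalIntegrable f volume s t) (hc : ∀ x ∈ Icc s t, ‖f c - f x‖ ≤ ε) :
    ‖(t - s) • f c - ∫ x in s..t, f x‖ ≤ ε * (t - s) := by
  have h := intervalIntegral.norm_integral_le_of_norm_le_const (f := fun x => f c - f x)
    fun x hx => hc x (Ioc_subset_Icc_self (by rwa [uIoc_of_le hst] at hx))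
  rwa [intervalIntegral.integral_sub intervalIntegrable_const hf, intervalIntegral.integral_const,
    abs_of_nonneg (sub_nonneg.2 hst)] at h

theorem hasRiemannIntegral_intervalIntegral [CompleteSpace E] (hab : a ≤ b)
    (hf : ContinuousOn f (Icc a b)) : HasRiemannIntegral f a b (∫ x in a..b, f x) := by
  intro ε hε
  set η := ε / (b - a + 1)
  have hη : 0 < η := div_pos hε (by linarith)
  obtain ⟨δ, hδ, hfδ⟩ := Metric.uniformContinuousOn_iff_le.1
    (isCompact_Icc.uniformContinuousOn_of_continuous hf) η hη
  refine ⟨δ, hδ, fun n p t hp0 hpn hp hmesh ht => ?_⟩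
  have hmono : StrictMonoOn p (Iic n) := strictMonoOn_Iic_of_lt_succ hp
  have hsub : ∀ i < n, Icc (p i) (p (i + 1)) ⊆ Icc a b := fun i hi =>
    Icc_subset_Icc (hp0 ▸ hmono.monotoneOn (mem_Iic.2 (Nat.zero_le n)) (mem_Iic.2 hi.le)
      (Nat.zero_le i)) (hpn ▸ hmono.monotoneOn (mem_Iic.2 hi) (mem_Iic.2 le_rfl) hi)
  have hint : ∀ i < n, IntervalIntegrable f volume (p i) (p (i + 1)) := fun i hi =>
    (hf.mono (hsub i hi)).intervalIntegrable_of_Icc (hp i hi).le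
  have hterm : ∀ i ∈ Finset.range n,
      ‖(p (i + 1) - p i) • f (t i) - ∫ x in p i..p (i + 1), f x‖ ≤ η * (p (i + 1) - p i) := by
    intro i hi
    rw [Finset.mem_range] at hi
    refine norm_smul_sub_integral_le (hp i hi).le (hint i hi) fun x hx => ?_
    rw [← dist_eq_norm]
    refine hfδ _ (hsub i hi (ht i hi)) _ (hsub i hi hx) ?_
    rw [Real.dist_eq, abs_le]
    constructor <;> linarith [(ht i hi).1, (ht i hi).2, hx.1, hx.2, hmesh i hi]
  calc ‖∑ i ∈ Finset.range n, (p (i + 1) - p i) • f (t i) - ∫ x in a..b, f x‖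
      = ‖∑ i ∈ Finset.range n,
          ((p (i + 1) - p i) • f (t i) - ∫ x in p i..p (i + 1), f x)‖ := by
        rw [Finset.sum_sub_distrib, intervalIntegral.sum_integral_adjacent_intervals hint,
          hp0, hpn]
    _ ≤ ∑ i ∈ Finset.range n, η * (p (i + 1) - p i) := norm_sum_le_of_le _ hterm
    _ = η * (b - a) := by rw [← Finset.mul_sum, Finset.sum_range_sub p n, hp0, hpn]
    _ < ε := by
        rw [div_mul_eq_mul_div, div_lt_iff₀ (by linarith)]
        nlinarith

lemma HasRiemannIntegral.unique {y₁ y₂ : E} (h₁ : HasRiemannIntegral f a b y₁)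
    (h₂ : HasRiemannIntegral f a b y₂) (hab : a < b) : y₁ = y₂ := by
  refine eq_of_forall_dist_le fun ε hε => ?_
  obtain ⟨δ₁, hδ₁, H₁⟩ := h₁ (ε / 2) (half_pos hε)
  obtain ⟨δ₂, hδ₂, H₂⟩ := h₂ (ε / 2) (half_pos hε)
  obtain ⟨n, hn⟩ := exists_nat_gt ((b - a) / min δ₁ δ₂)
  have hn0 : (0 : ℝ) < n := (div_pos (sub_pos.2 hab) (lt_min hδ₁ hδ₂)).trans hn
  set h := (b - a) / n
  have hh : 0 < h := div_pos (sub_pos.2 hab) hn0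
  have hhδ : h < min δ₁ δ₂ := by rwa [div_lt_comm₀ hn0 (lt_min hδ₁ hδ₂)]
  set p : ℕ → ℝ := fun i => a + i * h
  have hstep : ∀ i, p (i + 1) - p i = h := fun i => by simp only [p]; push_cast; ring
  have hp0 : p 0 = a := by simp [p]
  have hpn : p n = b := by simp only [p, h]; field_simp; ring
  have hp : ∀ i < n, p i < p (i + 1) := fun i _ => by linarith [hstep i]
  have htag : ∀ i < n, p i ∈ Icc (p i) (p (i + 1)) := fun i hi => ⟨le_rfl, (hp i hi).le⟩
  have S₁ := H₁ n p p hp0 hpn hp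
    (fun i _ => (hstep i).trans_lt (hhδ.trans_le (min_le_left _ _))) htag
  have S₂ := H₂ n p p hp0 hpn hp
    (fun i _ => (hstep i).trans_lt (hhδ.trans_le (min_le_right _ _))) htag
  rw [← dist_eq_norm] at S₁ S₂
  linarith [dist_triangle_left y₁ y₂ (∑ i ∈ Finset.range n, (p (i + 1) - p i) • f (p i))]

lemma HasRiemannIntegral.comp_linearIsometry {F : Type*} [NormedAddCommGroup F]
    [NormedSpace ℝ F] {y : E} (h : HasRiemannIntegral f a b y) (L : E →ₗᵢ[ℝ] F) :
    HasRiemannIntegral (fun x => L (f x)) a b (L y) := by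
  intro ε hε
  obtain ⟨δ, hδ, H⟩ := h ε hε
  refine ⟨δ, hδ, fun n p t hp0 hpn hp hmesh ht => ?_⟩
  simpa only [← L.map_smul, ← map_sum, ← map_sub, L.norm_map] using H n p t hp0 hpn hp hmesh ht

end Riemann

lemma exists_norm_lt_not_summable_of_not_completeSpace {E : Type*} [NormedAddCommGroup E]
    (hE : ¬ CompleteSpace E) (B : ℕ → ℝ) (hB : ∀ n, 0 < B n) :
    ∃ v : ℕ → E, (∀ n, ‖v n‖ < B n) ∧ ¬ Summable v := by
  by_contra! H
  refine hE (Metric.complete_of_convergent_controlled_sequences B hB fun u hu => ?_)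
  obtain ⟨y, hy⟩ := H (fun n => u (n + 1) - u n) fun n => by
    rw [← dist_eq_norm]; exact hu n (n + 1) n (by omega) le_rfl
  refine ⟨y + u 0, ?_⟩
  simpa only [Finset.sum_range_sub, sub_add_cancel] using hy.tendsto_sum_nat.add_const (u 0)

noncomputable def bumpRadius (k : ℕ) : ℝ := (1 / 2) ^ k / 4

lemma bumpRadius_pos (k : ℕ) : 0 < bumpRadius k := by unfold bumpRadius; positivity

lemma bumpRadius_le (k : ℕ) : bumpRadius k ≤ 1 / 4 := by
  unfold bumpRadius
  gcongr
  exact pow_le_one₀ (by norm_num) (by norm_num)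

noncomputable def bumpNearOne (k : ℕ) : ContDiffBump (1 - 2 * bumpRadius k) where
  rIn := bumpRadius k / 2
  rOut := bumpRadius k
  rIn_pos := half_pos (bumpRadius_pos k)
  rIn_lt_rOut := half_lt_self (bumpRadius_pos k)

lemma support_bumpNearOne_normed (k : ℕ) : Function.support ((bumpNearOne k).normed volume) =
    Ioo (1 - 3 * bumpRadius k) (1 - bumpRadius k) := by
  rw [ContDiffBump.support_normed_eq, Real.ball_eq_Ioo]
  congr 1 <;> simp only [bumpNearOne] <;> ring

lemma bumpNearOne_normed_le (k : ℕ) (x : ℝ) : (bumpNearOne k).normed volume x ≤ 4 * 2 ^ k := by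
  refine ((bumpNearOne k).normed_le_div_measure_closedBall_rIn volume x).trans_eq ?_
  change 1 / volume.real (Metric.closedBall _ (bumpRadius k / 2)) = _
  rw [Real.volume_real_closedBall (half_pos (bumpRadius_pos k)).le]
  simp only [bumpRadius]
  field_simp
  rw [← mul_pow]; norm_num

lemma integral_bumpNearOne_normed (k : ℕ) :
    ∫ x in (0 : ℝ)..1, (bumpNearOne k).normed volume x = 1 := by
  rw [intervalIntegral.integral_of_le zero_le_one, setIntegral_eq_integral_of_forall_compl_eq_zero,
    ContDiffBump.integral_normed]
  intro x hx
  rw [← Function.notMem_support, support_bumpNearOne_normed]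
  have := bumpRadius_le k
  exact fun h => hx ⟨by linarith [h.1], by linarith [h.2, bumpRadius_pos k]⟩

lemma eventually_bumpNearOne_normed_eq_zero (x : ℝ) :
    ∀ᶠ k in atTop, (bumpNearOne k).normed volume x = 0 := by
  have hr : Tendsto bumpRadius atTop (𝓝 0) := by
    show Tendsto (fun k => (1 / 2 : ℝ) ^ k / 4) atTop (𝓝 0)
    simpa only [zero_div] using (tendsto_pow_atTop_nhds_zero_of_lt_one
      (by norm_num : (0 : ℝ) ≤ 1 / 2) (by norm_num)).div_const 4
  rcases lt_or_ge x 1 with hx | hx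
  · filter_upwards [hr.eventually (gt_mem_nhds (by linarith : 0 < (1 - x) / 3))] with k hk
    rw [← Function.notMem_support, support_bumpNearOne_normed]
    exact fun h => by linarith [h.1]
  · refine Eventually.of_forall fun k => ?_
    rw [← Function.notMem_support, support_bumpNearOne_normed]
    exact fun h => by linarith [h.2, bumpRadius_pos k]

section BumpSeries

variable {E : Type*} [NormedAddCommGroup E] [NormedSpace ℝ E] (v : ℕ → E)

noncomputable def bumpSeries (x : ℝ) : E := ∑' k, (bumpNearOne k).normed volume x • v k

lemma hasSum_bumpSeries (x : ℝ) :
    HasSum (fun k => (bumpNearOne k).normed volume x • v k) (bumpSeries v x) := by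
  have h := eventually_bumpNearOne_normed_eq_zero x
  rw [← Nat.cofinite_eq_atTop] at h
  exact (summable_of_hasFiniteSupport <| (eventually_cofinite.1 h).subset
    fun k hk h0 => hk (by simp only [h0, zero_smul])).hasSum

variable {v}

lemma norm_bumpNearOne_smul_le (hv : ∀ k, ‖v k‖ ≤ (1 / 4) ^ k) (k : ℕ) (x : ℝ) :
    ‖(bumpNearOne k).normed volume x • v k‖ ≤ 4 * (1 / 2) ^ k := by
  rw [norm_smul, Real.norm_of_nonneg (ContDiffBump.nonneg_normed _ _)]
  calc _ ≤ 4 * 2 ^ k * (1 / 4) ^ k :=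
        mul_le_mul (bumpNearOne_normed_le k x) (hv k) (norm_nonneg _) (by positivity)
    _ = 4 * (1 / 2) ^ k := by rw [mul_assoc, ← mul_pow]; norm_num

lemma hasSum_coe_bumpSeries (x : ℝ) :
    HasSum (fun k => (bumpNearOne k).normed volume x • (v k : Completion E))
      ((bumpSeries v x : E) : Completion E) := by
  simpa only [Function.comp_def, Completion.coe_toComplₗᵢ, Completion.coe_smul] using
    (hasSum_bumpSeries v x).map (Completion.toComplₗᵢ (𝕜 := ℝ)) (Completion.continuous_coe E)

lemma continuous_bumpSeries (hv : ∀ k, ‖v k‖ ≤ (1 / 4) ^ k) : Continuous (bumpSeries v) := by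
  have hv' : ∀ k, ‖(v k : Completion E)‖ ≤ (1 / 4) ^ k := by simpa only [Completion.norm_coe]
  have : Continuous fun x => ((bumpSeries v x : E) : Completion E) := by
    simp_rw [← (hasSum_coe_bumpSeries _).tsum_eq]
    exact continuous_tsum (fun k => (bumpNearOne k).continuous_normed.smul continuous_const)
      (summable_geometric_two.mul_left 4) (norm_bumpNearOne_smul_le hv')
  exact (Completion.isUniformEmbedding_coe E).isInducing.continuous_iff.2 this

lemma hasSum_integral_coe_bumpSeries (hv : ∀ k, ‖v k‖ ≤ (1 / 4) ^ k) :
    HasSum (fun k => (v k : Completion E))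
      (∫ x in (0 : ℝ)..1, ((bumpSeries v x : E) : Completion E)) := by
  have hv' : ∀ k, ‖(v k : Completion E)‖ ≤ (1 / 4) ^ k := by simpa only [Completion.norm_coe]
  have := intervalIntegral.hasSum_integral_of_dominated_convergence
    (μ := volume) (a := 0) (b := 1)
    (F := fun k x => (bumpNearOne k).normed volume x • (v k : Completion E))
    (fun k _ => 4 * (1 / 2 : ℝ) ^ k)
    (fun k => ((bumpNearOne k).continuous_normed.smul continuous_const).aestronglyMeasurable)
    (fun k => ae_of_all _ fun x _ => norm_bumpNearOne_smul_le hv' k x)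
    (ae_of_all _ fun _ _ => summable_geometric_two.mul_left 4) intervalIntegrable_const
    (ae_of_all _ fun x _ => hasSum_coe_bumpSeries x)
  simpa only [intervalIntegral.integral_smul_const, integral_bumpNearOne_normed, one_smul]
    using this

lemma HasRiemannIntegral.hasSum_of_bumpSeries (hv : ∀ k, ‖v k‖ ≤ (1 / 4) ^ k) {y : E}
    (h : HasRiemannIntegral (bumpSeries v) 0 1 y) : HasSum v y := by
  let ι : E →ₗᵢ[ℝ] Completion E := Completion.toComplₗᵢ
  have hι := (h.comp_linearIsometry ι).unique (hasRiemannIntegral_intervalIntegral zero_le_one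
    (ι.continuous.comp (continuous_bumpSeries hv)).continuousOn) zero_lt_one
  rw [← (Completion.isUniformEmbedding_coe E).isInducing.hasSum_iff (g := ι), hι]
  exact hasSum_integral_coe_bumpSeries hv

end BumpSeries

/-- "Continuous on a segment implies integrable on that segment" holds for
`E`-valued functions iff `E` is complete: if `E` is complete every continuous
function on `[a,b]` is integrable, and if `E` is not complete some continuous
function on `[0,1]` is not integrable. -/
theorem continuous_implies_integrable_iff_complete (E : Type*) [NormedAddCommGroup E]
    [NormedSpace ℝ E] :
    (CompleteSpace E → ∀ (a b : ℝ) (f : ℝ → E), a ≤ b → ContinuousOn f (Set.Icc a b) →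
      ∃ y, HasRiemannIntegral f a b y) ∧
    (¬ CompleteSpace E → ∃ f : ℝ → E, ContinuousOn f (Set.Icc 0 1) ∧
      ¬ ∃ y, HasRiemannIntegral f 0 1 y) := by
  refine ⟨fun _ a b f hab hf => ⟨_, hasRiemannIntegral_intervalIntegral hab hf⟩, fun hE => ?_⟩
  obtain ⟨v, hv, hv_sum⟩ := exists_norm_lt_not_summable_of_not_completeSpace hE
    (fun k => (1 / 4 : ℝ) ^ k) fun k => by positivity
  refine ⟨bumpSeries v, (continuous_bumpSeries fun k => (hv k).le).continuousOn, ?_⟩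
  rintro ⟨y, hy⟩
  exact hv_sum ⟨y, hy.hasSum_of_bumpSeries fun k => (hv k).le⟩
end

section
/- For a real normed vector space E, the Chasles property (a function integrable on [a,b] is integrable on every subinterval [a,c] and [c,b], with additivity of integrals) holds for all E-valued functions on all intervals if and only if E is complete. -/
open Filter Topology

/-- The Chasles (interval additivity) property for `E`-valued Riemann integrals:
whenever `f` is integrable on `[a,b]` and `a ≤ c ≤ b`, it is integrable on `[a,c]`
and `[c,b]` and the integrals add up. -/
def ChaslesProperty (E : Type*) [NormedAddCommGroup E] [NormedSpace ℝ E] : Prop :=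
  ∀ (a b c : ℝ) (f : ℝ → E) (y : E), a ≤ c → c ≤ b → HasRiemannIntegral f a b y →
    ∃ y₁ y₂, HasRiemannIntegral f a c y₁ ∧ HasRiemannIntegral f c b y₂ ∧ y = y₁ + y₂

/-!
Completeness gives the Chasles property by the Cauchy criterion: fine partitions of `[a, c]` and
of `[c, b]` concatenate to a fine partition of `[a, b]`, so the Riemann sums over `[a, c]` form a
Cauchy net as soon as those over `[a, b]` converge.

Conversely, let `‖v (k + 1) - v k‖ ≤ 4⁻ᵏ` and let `g` be the step function equal to
`2ᵏ⁺¹ • (v (k + 1) - v k)` on `[1 - 2⁻ᵏ, 1 - 2⁻ᵏ⁻¹)`. A `δ`-fine partition of `[a, b]` weighs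
each of these intervals by its length inside `[a, b]` up to `2δ`, and the values of `g` above
`1 - 2⁻ᴺ` contribute `O(4⁻ᴺ + δ)`. Hence the Riemann sums of `x ↦ g x - g (x - 1)` tend to `0`
over `[0, 2]`, while over `[0, 1]` they are within `O(4⁻ᴺ + δ)` of `v N - v 0`. The Chasles
property makes this function integrable over `[0, 1]`, and then `v` converges to `v 0` plus that
integral.
-/

open Finset Set

theorem cauchy_map_of_tendsto_prod_add {E α β : Type*} [SeminormedAddCommGroup E]
    {F : Filter α} {G : Filter β} [F.NeBot] [G.NeBot] {u : α → E} {w : β → E} {y : E}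
    (h : Tendsto (fun x : α × β => u x.1 + w x.2) (F ×ˢ G) (𝓝 y)) : Cauchy (F.map u) := by
  refine Metric.cauchy_iff.2 ⟨inferInstance, fun ε hε => ?_⟩
  obtain ⟨S, hS, T, hT, hST⟩ :=
    Filter.eventually_prod_iff.1 (Metric.tendsto_nhds.1 h (ε / 2) (half_pos hε))
  obtain ⟨q, hq⟩ := Filter.nonempty_of_mem hT
  refine ⟨u '' {x | S x}, Filter.image_mem_map hS, ?_⟩
  rintro _ ⟨x, hx, rfl⟩ _ ⟨x', hx', rfl⟩
  calc dist (u x) (u x') = dist (u x + w q) (u x' + w q) := (dist_add_right _ _ _).symm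
    _ ≤ dist (u x + w q) y + dist (u x' + w q) y := dist_triangle_right _ _ _
    _ < ε / 2 + ε / 2 := add_lt_add (hST hx hq) (hST hx' hq)
    _ = ε := add_halves ε

theorem exists_tendsto_of_tendsto_prod_add {E α β : Type*} [NormedAddCommGroup E] [CompleteSpace E]
    {F : Filter α} {G : Filter β} [F.NeBot] [G.NeBot] {u : α → E} {w : β → E} {y : E}
    (h : Tendsto (fun x : α × β => u x.1 + w x.2) (F ×ˢ G) (𝓝 y)) :
    ∃ y₁ y₂, Tendsto u F (𝓝 y₁) ∧ Tendsto w G (𝓝 y₂) ∧ y = y₁ + y₂ := by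
  have h' : Tendsto (fun x : β × α => w x.1 + u x.2) (G ×ˢ F) (𝓝 y) :=
    (h.comp Filter.tendsto_prod_swap).congr fun _ => add_comm _ _
  obtain ⟨y₁, hu⟩ := cauchy_map_iff_exists_tendsto.1 (cauchy_map_of_tendsto_prod_add h)
  obtain ⟨y₂, hw⟩ := cauchy_map_iff_exists_tendsto.1 (cauchy_map_of_tendsto_prod_add h')
  exact ⟨y₁, y₂, hu, hw, tendsto_nhds_unique h
    ((hu.comp Filter.tendsto_fst).add (hw.comp Filter.tendsto_snd))⟩

/-- The length of `[a, b] ∩ (-∞, x]`, for `a ≤ b`. -/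
def lengthBelow (a b x : ℝ) : ℝ := min b x - min a x

theorem lengthBelow_sub_le {a b x y : ℝ} (h : x ≤ y) :
    lengthBelow a b y - lengthBelow a b x ≤ y - x := by
  simp only [lengthBelow, min_def]
  split_ifs <;> linarith

theorem abs_cell_sub_le {u v t x : ℝ} (ht : t ∈ Icc u v) :
    |(v - u) * (Iio x).indicator 1 t - (min v x - min u x)| ≤ v - u := by
  obtain ⟨hut, htv⟩ := ht
  simp only [indicator_apply, Set.mem_Iio, Pi.one_apply, min_def]
  rw [abs_le]
  split_ifs <;> constructor <;> linarith

theorem cell_sub_eq_zero {u v t x : ℝ} (ht : t ∈ Icc u v) (hx : x ∉ Ioc u v) :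
    (v - u) * (Iio x).indicator 1 t - (min v x - min u x) = 0 := by
  obtain ⟨hut, htv⟩ := ht
  simp only [Set.mem_Ioc, not_and_or, not_lt, not_le] at hx
  simp only [indicator_apply, Set.mem_Iio, Pi.one_apply, min_def]
  split_ifs <;> rcases hx with hx | hx <;> linarith

structure TaggedPartition where
  len : ℕ
  pt : ℕ → ℝ
  tag : ℕ → ℝ

namespace TaggedPartition

variable {E : Type*} [NormedAddCommGroup E] [NormedSpace ℝ E] (P Q : TaggedPartition)

def riemannSum (f : ℝ → E) : E :=
  ∑ i ∈ range P.len, (P.pt (i + 1) - P.pt i) • f (P.tag i)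

structure IsFine (a b δ : ℝ) : Prop where
  pt_zero : P.pt 0 = a
  pt_len : P.pt P.len = b
  pt_lt : ∀ i < P.len, P.pt i < P.pt (i + 1)
  width_lt : ∀ i < P.len, P.pt (i + 1) - P.pt i < δ
  tag_mem : ∀ i < P.len, P.tag i ∈ Set.Icc (P.pt i) (P.pt (i + 1))

variable {P Q} {a b c δ δ' : ℝ}

theorem IsFine.mono (hP : P.IsFine a b δ) (h : δ ≤ δ') : P.IsFine a b δ' :=
  { hP with width_lt := fun i hi => (hP.width_lt i hi).trans_le h }

theorem IsFine.pt_mono (hP : P.IsFine a b δ) {i j : ℕ} (hij : i ≤ j) (hj : j ≤ P.len) :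
    P.pt i ≤ P.pt j := by
  induction j, hij using Nat.le_induction with
  | base => rfl
  | succ j _ ih => exact (ih (by omega)).trans (hP.pt_lt j (by omega)).le

theorem IsFine.width_nonneg (hP : P.IsFine a b δ) {i : ℕ} (hi : i < P.len) :
    0 ≤ P.pt (i + 1) - P.pt i :=
  sub_nonneg.2 (hP.pt_lt i hi).le

theorem exists_isFine (hab : a ≤ b) (hδ : 0 < δ) : ∃ P : TaggedPartition, P.IsFine a b δ := by
  rcases hab.eq_or_lt with rfl | hab
  · exact ⟨⟨0, fun _ => a, fun _ => a⟩, rfl, rfl, by simp, by simp, by simp⟩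
  obtain ⟨n, hn⟩ := exists_nat_gt ((b - a) / δ)
  have hn0 : (0 : ℝ) < n := (div_pos (sub_pos.2 hab) hδ).trans hn
  have hw : 0 < (b - a) / n := div_pos (sub_pos.2 hab) hn0
  let p : ℕ → ℝ := fun i => a + i * ((b - a) / n)
  have hp : ∀ i, p (i + 1) - p i = (b - a) / n := fun i => by push_cast [p]; ring
  refine ⟨⟨n, p, p⟩, by simp [p], by simp [p]; field_simp; ring, fun i _ => ?_, fun i _ => ?_,
    fun i _ => ⟨le_rfl, ?_⟩⟩
  · linarith [hp i]
  · rw [hp, div_lt_iff₀ hn0]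
    rwa [div_lt_iff₀ hδ, mul_comm] at hn
  · linarith [hp i]

def append (P Q : TaggedPartition) : TaggedPartition where
  len := P.len + Q.len
  pt i := if i < P.len then P.pt i else Q.pt (i - P.len)
  tag i := if i < P.len then P.tag i else Q.tag (i - P.len)

theorem append_pt_of_le (hPQ : P.pt P.len = Q.pt 0) {i : ℕ} (hi : i ≤ P.len) :
    (P.append Q).pt i = P.pt i := by
  rcases hi.lt_or_eq with hi | rfl
  · simp [append, hi]
  · simp [append, hPQ]

@[simp] theorem append_pt_add (i : ℕ) : (P.append Q).pt (P.len + i) = Q.pt i := by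
  simp [append]

theorem append_tag_of_lt {i : ℕ} (hi : i < P.len) : (P.append Q).tag i = P.tag i := by
  simp [append, hi]

@[simp] theorem append_tag_add (i : ℕ) : (P.append Q).tag (P.len + i) = Q.tag i := by
  simp [append]

theorem forall_cell_append (hPQ : P.pt P.len = Q.pt 0) {R : ℝ → ℝ → ℝ → Prop}
    (hP : ∀ i < P.len, R (P.pt i) (P.pt (i + 1)) (P.tag i))
    (hQ : ∀ j < Q.len, R (Q.pt j) (Q.pt (j + 1)) (Q.tag j)) :
    ∀ i < (P.append Q).len,
      R ((P.append Q).pt i) ((P.append Q).pt (i + 1)) ((P.append Q).tag i) := by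
  intro i hi
  rcases lt_or_ge i P.len with hiP | hiP
  · rw [append_pt_of_le hPQ hiP.le, append_pt_of_le hPQ hiP, append_tag_of_lt hiP]
    exact hP i hiP
  · obtain ⟨j, rfl⟩ := Nat.exists_eq_add_of_le hiP
    rw [add_assoc, append_pt_add, append_pt_add, append_tag_add]
    exact hQ j (by simp [append] at hi; omega)

theorem IsFine.append (hP : P.IsFine a c δ) (hQ : Q.IsFine c b δ) :
    (P.append Q).IsFine a b δ := by
  have hPQ : P.pt P.len = Q.pt 0 := hP.pt_len.trans hQ.pt_zero.symm
  exact ⟨(append_pt_of_le hPQ (Nat.zero_le _)).trans hP.pt_zero,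
    (append_pt_add _).trans hQ.pt_len,
    forall_cell_append (R := fun u v _ => u < v) hPQ hP.pt_lt hQ.pt_lt,
    forall_cell_append (R := fun u v _ => v - u < δ) hPQ hP.width_lt hQ.width_lt,
    forall_cell_append (R := fun u v t => t ∈ Set.Icc u v) hPQ hP.tag_mem hQ.tag_mem⟩

theorem riemannSum_append (hPQ : P.pt P.len = Q.pt 0) (f : ℝ → E) :
    (P.append Q).riemannSum f = P.riemannSum f + Q.riemannSum f := by
  rw [riemannSum, show (P.append Q).len = P.len + Q.len from rfl, sum_range_add]
  congr 1
  · refine sum_congr rfl fun i hi => ?_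
    rw [Finset.mem_range] at hi
    rw [append_pt_of_le hPQ hi.le, append_pt_of_le hPQ hi, append_tag_of_lt hi]
  · refine sum_congr rfl fun j _ => ?_
    rw [add_assoc, append_pt_add, append_pt_add, append_tag_add]

def riemannFilter (a b : ℝ) : Filter TaggedPartition :=
  ⨅ δ > 0, Filter.principal {P | P.IsFine a b δ}

theorem hasBasis_riemannFilter (a b : ℝ) :
    (riemannFilter a b).HasBasis (fun δ => 0 < δ) fun δ => {P | P.IsFine a b δ} :=
  Filter.hasBasis_biInf_principal'
    (fun δ₁ h₁ δ₂ h₂ => ⟨min δ₁ δ₂, lt_min h₁ h₂, fun _ hP => hP.mono (min_le_left _ _),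
      fun _ hP => hP.mono (min_le_right _ _)⟩) ⟨1, one_pos⟩

theorem neBot_riemannFilter (hab : a ≤ b) : (riemannFilter a b).NeBot :=
  (hasBasis_riemannFilter a b).neBot_iff.2 fun hδ => exists_isFine hab hδ

theorem eventually_isFine (a b : ℝ) (hδ : 0 < δ) : ∀ᶠ P in riemannFilter a b, P.IsFine a b δ :=
  (hasBasis_riemannFilter a b).mem_of_mem hδ

theorem tendsto_append_riemannFilter :
    Filter.Tendsto (fun PQ : TaggedPartition × TaggedPartition => PQ.1.append PQ.2)
      (riemannFilter a c ×ˢ riemannFilter c b) (riemannFilter a b) :=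
  ((hasBasis_riemannFilter a c).prod (hasBasis_riemannFilter c b)).tendsto_iff
    (hasBasis_riemannFilter a b) |>.2 fun δ hδ =>
      ⟨(δ, δ), ⟨hδ, hδ⟩, fun _ hPQ => hPQ.1.append hPQ.2⟩

theorem riemannSum_add (f g : ℝ → E) : P.riemannSum (f + g) = P.riemannSum f + P.riemannSum g := by
  simp only [riemannSum, Pi.add_apply, smul_add, sum_add_distrib]

theorem riemannSum_sub (f g : ℝ → E) : P.riemannSum (f - g) = P.riemannSum f - P.riemannSum g := by
  simp only [riemannSum, Pi.sub_apply, smul_sub, sum_sub_distrib]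

theorem riemannSum_sum {ι : Type*} (s : Finset ι) (f : ι → ℝ → E) :
    P.riemannSum (∑ k ∈ s, f k) = ∑ k ∈ s, P.riemannSum (f k) := by
  simp only [riemannSum, Finset.sum_apply, smul_sum]
  exact sum_comm

def shift (P : TaggedPartition) (τ : ℝ) : TaggedPartition :=
  ⟨P.len, fun i => P.pt i - τ, fun i => P.tag i - τ⟩

theorem riemannSum_shift (τ : ℝ) (f : ℝ → E) :
    (P.shift τ).riemannSum f = P.riemannSum fun x => f (x - τ) := by
  simp only [riemannSum, shift, sub_sub_sub_cancel_right]

theorem IsFine.shift (hP : P.IsFine a b δ) (τ : ℝ) : (P.shift τ).IsFine (a - τ) (b - τ) δ where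
  pt_zero := by simp [TaggedPartition.shift, hP.pt_zero]
  pt_len := by simp [TaggedPartition.shift, hP.pt_len]
  pt_lt i hi := by simpa [TaggedPartition.shift] using hP.pt_lt i hi
  width_lt i hi := by simpa [TaggedPartition.shift] using hP.width_lt i hi
  tag_mem i hi := by simpa [TaggedPartition.shift] using hP.tag_mem i hi

noncomputable def weight (P : TaggedPartition) (s : Set ℝ) : ℝ :=
  P.riemannSum (s.indicator 1)

theorem riemannSum_indicator_const (s : Set ℝ) (c : E) :
    P.riemannSum (s.indicator fun _ => c) = P.weight s • c := by
  simp only [weight, riemannSum, sum_smul, smul_eq_mul, mul_smul]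
  refine sum_congr rfl fun i _ => ?_
  by_cases h : P.tag i ∈ s <;> simp [h]

theorem IsFine.norm_riemannSum_le (hP : P.IsFine a b δ) {f : ℝ → E} {s : Set ℝ} {M : ℝ}
    (hf : ∀ x ∉ s, f x = 0) (hM : ∀ x ∈ s, ‖f x‖ ≤ M) : ‖P.riemannSum f‖ ≤ P.weight s * M := by
  rw [weight, riemannSum, riemannSum, sum_mul]
  refine (norm_sum_le _ _).trans (sum_le_sum fun i hi => ?_)
  have hw := hP.width_nonneg (Finset.mem_range.1 hi)
  rw [norm_smul, Real.norm_of_nonneg hw, smul_eq_mul, mul_assoc]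
  refine mul_le_mul_of_nonneg_left ?_ hw
  by_cases h : P.tag i ∈ s
  · simpa [h] using hM _ h
  · simp [h, hf _ h]

theorem IsFine.eq_of_mem_Ioc (hP : P.IsFine a b δ) {i j : ℕ} {x : ℝ} (hi : i < P.len)
    (hj : j < P.len) (hxi : x ∈ Ioc (P.pt i) (P.pt (i + 1)))
    (hxj : x ∈ Ioc (P.pt j) (P.pt (j + 1))) : i = j := by
  by_contra hij
  rcases Nat.lt_or_gt_of_ne hij with h | h
  · linarith [hxi.2, hxj.1, hP.pt_mono (Nat.succ_le_of_lt h) hj.le]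
  · linarith [hxi.1, hxj.2, hP.pt_mono (Nat.succ_le_of_lt h) hi.le]

/-- `lengthBelow a b x` telescopes over the cells as `∑ (min (pt (i + 1)) x - min (pt i) x)`,
and a cell contributes an error only if `x` lies in it. -/
theorem IsFine.abs_weight_Iio_sub_le (hP : P.IsFine a b δ) (hδ : 0 ≤ δ) (x : ℝ) :
    |P.weight (Iio x) - lengthBelow a b x| ≤ δ := by
  have htel : lengthBelow a b x = ∑ i ∈ range P.len, (min (P.pt (i + 1)) x - min (P.pt i) x) := by
    rw [sum_range_sub (fun i => min (P.pt i) x), hP.pt_len, hP.pt_zero, lengthBelow]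
  rw [htel, weight, riemannSum, ← sum_sub_distrib]
  simp only [smul_eq_mul]
  by_cases hx : ∃ j < P.len, x ∈ Ioc (P.pt j) (P.pt (j + 1))
  · obtain ⟨j, hj, hxj⟩ := hx
    rw [sum_eq_single j]
    · exact (abs_cell_sub_le (hP.tag_mem j hj)).trans (hP.width_lt j hj).le
    · intro i hi hij
      exact cell_sub_eq_zero (hP.tag_mem i (Finset.mem_range.1 hi))
        fun hxi => hij (hP.eq_of_mem_Ioc (Finset.mem_range.1 hi) hj hxi hxj)
    · exact fun hj' => absurd (Finset.mem_range.2 hj) hj'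
  · push Not at hx
    rw [sum_eq_zero fun i hi =>
      cell_sub_eq_zero (hP.tag_mem i (Finset.mem_range.1 hi)) (hx i (Finset.mem_range.1 hi))]
    simpa using hδ

theorem IsFine.abs_weight_Ico_sub_le (hP : P.IsFine a b δ) (hδ : 0 ≤ δ) {x y : ℝ} (hxy : x ≤ y) :
    |P.weight (Ico x y) - (lengthBelow a b y - lengthBelow a b x)| ≤ 2 * δ := by
  have hIco : P.weight (Ico x y) = P.weight (Iio y) - P.weight (Iio x) := by
    rw [weight, weight, weight, ← riemannSum_sub]
    congr 1
    funext t
    by_cases hty : t < y <;> by_cases htx : t < x <;> simp [indicator_apply, hty, htx]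
    linarith
  have hx := hP.abs_weight_Iio_sub_le hδ x
  have hy := hP.abs_weight_Iio_sub_le hδ y
  rw [abs_le] at hx hy ⊢
  rw [hIco]
  constructor <;> linarith

end TaggedPartition

open TaggedPartition

theorem hasRiemannIntegral_iff_tendsto {E : Type*} [NormedAddCommGroup E] [NormedSpace ℝ E]
    {f : ℝ → E} {a b : ℝ} {y : E} :
    HasRiemannIntegral f a b y ↔
      Tendsto (fun P : TaggedPartition => P.riemannSum f) (riemannFilter a b) (𝓝 y) := by
  rw [(hasBasis_riemannFilter a b).tendsto_iff Metric.nhds_basis_ball]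
  refine forall₂_congr fun ε _ => exists_congr fun δ => and_congr_right fun _ =>
    ⟨fun h P hP => ?_, fun h n p t h₀ h₁ h₂ h₃ h₄ => ?_⟩
  · rw [Metric.mem_ball, dist_eq_norm]
    exact h P.len P.pt P.tag hP.pt_zero hP.pt_len hP.pt_lt hP.width_lt hP.tag_mem
  · simpa [dist_eq_norm, riemannSum] using h ⟨n, p, t⟩ ⟨h₀, h₁, h₂, h₃, h₄⟩

theorem chaslesProperty_of_completeSpace (E : Type*) [NormedAddCommGroup E] [NormedSpace ℝ E]
    [CompleteSpace E] : ChaslesProperty E := by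
  intro a b c f y hac hcb hy
  have := neBot_riemannFilter hac
  have := neBot_riemannFilter hcb
  simp only [hasRiemannIntegral_iff_tendsto] at hy ⊢
  have hsum : ∀ᶠ PQ in riemannFilter a c ×ˢ riemannFilter c b,
      (PQ.1.append PQ.2).riemannSum f = PQ.1.riemannSum f + PQ.2.riemannSum f := by
    filter_upwards [prod_mem_prod (eventually_isFine a c one_pos) (eventually_isFine c b one_pos)]
      with PQ hPQ
    exact riemannSum_append (hPQ.1.pt_len.trans hPQ.2.pt_zero.symm) f
  exact exists_tendsto_of_tendsto_prod_add ((hy.comp tendsto_append_riemannFilter).congr' hsum)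

noncomputable def dyadicPoint (k : ℕ) : ℝ := 1 - 2⁻¹ ^ k

theorem dyadicPoint_strictMono : StrictMono dyadicPoint := fun _ _ h =>
  sub_lt_sub_left (pow_lt_pow_right_of_lt_one₀ (by norm_num) (by norm_num) h) 1

theorem dyadicPoint_mem_Ico (k : ℕ) : dyadicPoint k ∈ Set.Ico 0 1 :=
  ⟨sub_nonneg.2 (pow_le_one₀ (by norm_num) (by norm_num)), sub_lt_self 1 (by positivity)⟩

theorem dyadicPoint_succ_sub (k : ℕ) : dyadicPoint (k + 1) - dyadicPoint k = 2⁻¹ ^ (k + 1) := by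
  simp only [dyadicPoint, pow_succ]
  ring

section DyadicStep

variable {E : Type*} [NormedAddCommGroup E] {c : ℕ → E}

noncomputable def dyadicStep (c : ℕ → E) (x : ℝ) : E :=
  ∑' k, (Ico (dyadicPoint k) (dyadicPoint (k + 1))).indicator (fun _ => c k) x

theorem dyadicStep_of_one_le {x : ℝ} (hx : 1 ≤ x) : dyadicStep c x = 0 := by
  rw [dyadicStep, tsum_congr fun k => indicator_of_notMem
    (notMem_Ico_of_ge ((dyadicPoint_mem_Ico (k + 1)).2.le.trans hx)) _, tsum_zero]

theorem dyadicStep_eq_sum_add (c : ℕ → E) (N : ℕ) :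
    dyadicStep c =
      (∑ k ∈ range N, (Ico (dyadicPoint k) (dyadicPoint (k + 1))).indicator fun _ => c k)
        + (Ico (dyadicPoint N) 1).indicator (dyadicStep c) := by
  funext x
  simp only [Pi.add_apply, Finset.sum_apply]
  rcases lt_or_ge x (dyadicPoint N) with hx | hx
  · rw [indicator_of_notMem (notMem_Ico_of_lt hx), add_zero, dyadicStep]
    exact tsum_eq_sum fun k hk => indicator_of_notMem (notMem_Ico_of_lt
      (hx.trans_le (dyadicPoint_strictMono.monotone (by simpa using hk)))) _
  · rw [sum_eq_zero fun k hk => indicator_of_notMem (notMem_Ico_of_ge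
      ((dyadicPoint_strictMono.monotone (by simpa using hk)).trans hx)) _, zero_add]
    rcases lt_or_ge x 1 with h1 | h1
    · rw [indicator_of_mem (Set.mem_Ico.2 ⟨hx, h1⟩)]
    · rw [indicator_of_notMem (notMem_Ico_of_ge h1), dyadicStep_of_one_le h1]

theorem norm_dyadicStep_le (hc : ∀ k, ‖c k‖ ≤ 2 * 2⁻¹ ^ k) {N : ℕ} {x : ℝ}
    (hx : dyadicPoint N ≤ x) : ‖dyadicStep c x‖ ≤ 2 * 2⁻¹ ^ N := by
  by_cases h : ∃ j, x ∈ Ico (dyadicPoint j) (dyadicPoint (j + 1))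
  · obtain ⟨j, hj⟩ := h
    have hdisj :
        Pairwise (Function.onFun Disjoint fun k => Ico (dyadicPoint k) (dyadicPoint (k + 1))) := by
      simpa only [Order.succ_eq_add_one] using
        dyadicPoint_strictMono.monotone.pairwise_disjoint_on_Ico_succ
    have hval : dyadicStep c x = c j := by
      rw [dyadicStep, tsum_eq_single j fun k hk => indicator_of_notMem
        (fun hk' => (hdisj hk).le_bot ⟨hk', hj⟩) _, indicator_of_mem hj]
    have hNj : N ≤ j :=
      Nat.lt_succ_iff.1 (dyadicPoint_strictMono.lt_iff_lt.1 (hx.trans_lt hj.2))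
    rw [hval]
    exact (hc j).trans (mul_le_mul_of_nonneg_left
      (pow_le_pow_of_le_one (by norm_num) (by norm_num) hNj) zero_le_two)
  · push Not at h
    rw [dyadicStep, tsum_congr fun k => indicator_of_notMem (h k) _, tsum_zero, norm_zero]
    positivity

end DyadicStep

namespace TaggedPartition.IsFine

variable {E : Type*} [NormedAddCommGroup E] [NormedSpace ℝ E] {c : ℕ → E} {P : TaggedPartition}
  {a b δ : ℝ}

theorem norm_riemannSum_dyadicStep_sub_le (hP : P.IsFine a b δ) (hδ : 0 ≤ δ)
    (hc : ∀ k, ‖c k‖ ≤ 2 * 2⁻¹ ^ k) (N : ℕ) :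
    ‖P.riemannSum (dyadicStep c) - ∑ k ∈ range N,
        (lengthBelow a b (dyadicPoint (k + 1)) - lengthBelow a b (dyadicPoint k)) • c k‖
      ≤ 12 * δ + 2 * 4⁻¹ ^ N := by
  set tail := (Ico (dyadicPoint N) 1).indicator (dyadicStep c)
  have hsplit : P.riemannSum (dyadicStep c) =
      ∑ k ∈ range N, P.weight (Ico (dyadicPoint k) (dyadicPoint (k + 1))) • c k
        + P.riemannSum tail := by
    conv_lhs => rw [dyadicStep_eq_sum_add c N]
    simp only [riemannSum_add, riemannSum_sum, riemannSum_indicator_const, tail]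
  have hhead : ‖∑ k ∈ range N, (P.weight (Ico (dyadicPoint k) (dyadicPoint (k + 1)))
      - (lengthBelow a b (dyadicPoint (k + 1)) - lengthBelow a b (dyadicPoint k))) • c k‖
      ≤ 8 * δ :=
    calc _ ≤ ∑ k ∈ range N, 2 * δ * (2 * 2⁻¹ ^ k) := by
          refine (norm_sum_le _ _).trans (sum_le_sum fun k _ => ?_)
          rw [norm_smul, Real.norm_eq_abs]
          exact mul_le_mul (hP.abs_weight_Ico_sub_le hδ (dyadicPoint_strictMono.monotone k.le_succ))
            (hc k) (norm_nonneg _) (by positivity)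
      _ = 4 * δ * ∑ k ∈ range N, (1 / 2 : ℝ) ^ k := by
          rw [mul_sum]
          exact sum_congr rfl fun k _ => by rw [one_div]; ring
      _ ≤ 4 * δ * 2 := by gcongr; exact sum_geometric_two_le N
      _ = 8 * δ := by ring
  have hweight : P.weight (Ico (dyadicPoint N) 1) ≤ 2⁻¹ ^ N + 2 * δ := by
    have h₁ := (abs_le.1 (hP.abs_weight_Ico_sub_le hδ (dyadicPoint_mem_Ico N).2.le)).2
    have h₂ := lengthBelow_sub_le (a := a) (b := b) (dyadicPoint_mem_Ico N).2.le
    simp only [dyadicPoint] at h₁ h₂ ⊢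
    linarith
  have htail : ‖P.riemannSum tail‖ ≤ 2 * 4⁻¹ ^ N + 4 * δ := by
    have hpow : (2⁻¹ : ℝ) ^ N * 2⁻¹ ^ N = 4⁻¹ ^ N := by rw [← mul_pow]; norm_num
    have hpow_le : (2⁻¹ : ℝ) ^ N ≤ 1 := pow_le_one₀ (by norm_num) (by norm_num)
    calc ‖P.riemannSum tail‖ ≤ P.weight (Ico (dyadicPoint N) 1) * (2 * 2⁻¹ ^ N) :=
          hP.norm_riemannSum_le (fun x hx => indicator_of_notMem hx _)
            fun x hx => by simpa only [tail, indicator_of_mem hx] using norm_dyadicStep_le hc hx.1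
      _ ≤ (2⁻¹ ^ N + 2 * δ) * (2 * 2⁻¹ ^ N) := by gcongr
      _ ≤ 2 * 4⁻¹ ^ N + 4 * δ := by nlinarith
  rw [hsplit, add_sub_right_comm, ← sum_sub_distrib]
  simp only [← sub_smul]
  calc _ ≤ _ := norm_add_le _ _
    _ ≤ 12 * δ + 2 * 4⁻¹ ^ N := by linarith

end TaggedPartition.IsFine

section DyadicStepDiff

variable {E : Type*} [NormedAddCommGroup E] [NormedSpace ℝ E] {c : ℕ → E}

noncomputable def dyadicStepDiff (c : ℕ → E) (x : ℝ) : E :=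
  dyadicStep c x - dyadicStep c (x - 1)

theorem TaggedPartition.IsFine.norm_riemannSum_dyadicStepDiff_sub_le {P : TaggedPartition}
    {a b δ : ℝ} (hP : P.IsFine a b δ) (hδ : 0 ≤ δ) (hc : ∀ k, ‖c k‖ ≤ 2 * 2⁻¹ ^ k) (N : ℕ) :
    ‖P.riemannSum (dyadicStepDiff c) - ∑ k ∈ range N,
        ((lengthBelow a b (dyadicPoint (k + 1)) - lengthBelow a b (dyadicPoint k))
          - (lengthBelow (a - 1) (b - 1) (dyadicPoint (k + 1))
            - lengthBelow (a - 1) (b - 1) (dyadicPoint k))) • c k‖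
      ≤ 24 * δ + 4 * 4⁻¹ ^ N := by
  have h₁ := hP.norm_riemannSum_dyadicStep_sub_le hδ hc N
  have h₂ := (hP.shift 1).norm_riemannSum_dyadicStep_sub_le hδ hc N
  rw [show dyadicStepDiff c = dyadicStep c - fun x => dyadicStep c (x - 1) from rfl,
    riemannSum_sub, ← riemannSum_shift]
  calc _ = ‖(P.riemannSum (dyadicStep c) - ∑ k ∈ range N,
          (lengthBelow a b (dyadicPoint (k + 1)) - lengthBelow a b (dyadicPoint k)) • c k)
        - ((P.shift 1).riemannSum (dyadicStep c) - ∑ k ∈ range N,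
          (lengthBelow (a - 1) (b - 1) (dyadicPoint (k + 1))
            - lengthBelow (a - 1) (b - 1) (dyadicPoint k)) • c k)‖ := by
        congr 1
        simp only [sub_smul, sum_sub_distrib]
        abel
    _ ≤ _ := norm_sub_le _ _
    _ ≤ 24 * δ + 4 * 4⁻¹ ^ N := by linarith

theorem hasRiemannIntegral_dyadicStepDiff (hc : ∀ k, ‖c k‖ ≤ 2 * 2⁻¹ ^ k) :
    HasRiemannIntegral (dyadicStepDiff c) 0 2 0 := by
  rw [hasRiemannIntegral_iff_tendsto, Metric.tendsto_nhds]
  intro ε hε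
  obtain ⟨N, hN⟩ :=
    exists_pow_lt_of_lt_one (by positivity : 0 < ε / 8) (by norm_num : (4⁻¹ : ℝ) < 1)
  filter_upwards [eventually_isFine 0 2 (by positivity : 0 < ε / 48)] with P hP
  have h := hP.norm_riemannSum_dyadicStepDiff_sub_le (by positivity) hc N
  have hlen : ∀ k,
      lengthBelow (0 - 1) (2 - 1) (dyadicPoint k) = lengthBelow 0 2 (dyadicPoint k) + 1 := by
    intro k
    obtain ⟨h₀, h₁⟩ := dyadicPoint_mem_Ico k
    simp only [lengthBelow, min_def]
    split_ifs <;> linarith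
  have hD : ∑ k ∈ range N,
      ((lengthBelow 0 2 (dyadicPoint (k + 1)) - lengthBelow 0 2 (dyadicPoint k))
        - (lengthBelow (0 - 1) (2 - 1) (dyadicPoint (k + 1))
          - lengthBelow (0 - 1) (2 - 1) (dyadicPoint k))) • c k = 0 :=
    sum_eq_zero fun k _ => by rw [hlen, hlen, add_sub_add_right_eq_sub, sub_self, zero_smul]
  rw [hD, sub_zero] at h
  rw [dist_zero_right]
  linarith

theorem tendsto_sum_of_hasRiemannIntegral_dyadicStepDiff (hc : ∀ k, ‖c k‖ ≤ 2 * 2⁻¹ ^ k) {y : E}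
    (hy : HasRiemannIntegral (dyadicStepDiff c) 0 1 y) :
    Tendsto (fun N => ∑ k ∈ range N, (2⁻¹ : ℝ) ^ (k + 1) • c k) atTop (𝓝 y) := by
  have := neBot_riemannFilter (zero_le_one' ℝ)
  have hD : ∀ N, ∑ k ∈ range N,
      ((lengthBelow 0 1 (dyadicPoint (k + 1)) - lengthBelow 0 1 (dyadicPoint k))
        - (lengthBelow (0 - 1) (1 - 1) (dyadicPoint (k + 1))
          - lengthBelow (0 - 1) (1 - 1) (dyadicPoint k))) • c k
      = ∑ k ∈ range N, (2⁻¹ : ℝ) ^ (k + 1) • c k := by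
    refine fun N => sum_congr rfl fun k _ => ?_
    obtain ⟨h₀, h₁⟩ := dyadicPoint_mem_Ico k
    obtain ⟨h₀', h₁'⟩ := dyadicPoint_mem_Ico (k + 1)
    rw [← dyadicPoint_succ_sub]
    simp only [lengthBelow, min_def]
    split_ifs <;> first | rfl | (exfalso; linarith) | (congr 1; ring)
  have hbound : ∀ N, ‖∑ k ∈ range N, (2⁻¹ : ℝ) ^ (k + 1) • c k - y‖ ≤ 4 * 4⁻¹ ^ N := by
    intro N
    refine le_of_forall_pos_le_add fun ε hε => le_of_tendsto
      ((hasRiemannIntegral_iff_tendsto.1 hy).const_sub _).norm ?_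
    filter_upwards [eventually_isFine 0 1 (by positivity : 0 < ε / 24)] with P hP
    have h := hP.norm_riemannSum_dyadicStepDiff_sub_le (by positivity) hc N
    rw [hD] at h
    rw [norm_sub_rev]
    linarith
  rw [tendsto_iff_norm_sub_tendsto_zero]
  refine squeeze_zero (fun _ => norm_nonneg _) hbound ?_
  simpa using (tendsto_pow_atTop_nhds_zero_of_lt_one (by norm_num : (0 : ℝ) ≤ 4⁻¹)
    (by norm_num)).const_mul 4

end DyadicStepDiff

theorem completeSpace_of_chaslesProperty (E : Type*) [NormedAddCommGroup E] [NormedSpace ℝ E]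
    (h : ChaslesProperty E) : CompleteSpace E := by
  refine Metric.complete_of_convergent_controlled_sequences (fun N => 4⁻¹ ^ N)
    (fun N => by positivity) fun v hv => ?_
  set c : ℕ → E := fun k => (2 : ℝ) ^ (k + 1) • (v (k + 1) - v k)
  have hc : ∀ k, ‖c k‖ ≤ 2 * 2⁻¹ ^ k := by
    intro k
    have hk := (hv k (k + 1) k k.le_succ le_rfl).le
    rw [dist_eq_norm] at hk
    calc ‖c k‖ = 2 ^ (k + 1) * ‖v (k + 1) - v k‖ := by simp [c, norm_smul]
      _ ≤ 2 ^ (k + 1) * 4⁻¹ ^ k := by gcongr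
      _ = 2 * 2⁻¹ ^ k := by
        rw [show (4⁻¹ : ℝ) = 2⁻¹ * 2⁻¹ by norm_num, mul_pow, pow_succ]
        field_simp
        rw [← mul_pow]
        norm_num
  obtain ⟨y, -, hy, -, -⟩ := h 0 2 1 (dyadicStepDiff c) 0 zero_le_one one_le_two
    (hasRiemannIntegral_dyadicStepDiff hc)
  have hv_eq : ∀ N, v N = v 0 + ∑ k ∈ range N, (2⁻¹ : ℝ) ^ (k + 1) • c k := by
    intro N
    simp only [c, smul_smul, ← mul_pow, inv_mul_cancel₀ (two_ne_zero' ℝ), one_pow, one_smul,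
      sum_range_sub, add_sub_cancel]
  refine ⟨v 0 + y, ?_⟩
  simpa only [← hv_eq] using
    (tendsto_sum_of_hasRiemannIntegral_dyadicStepDiff hc hy).const_add (v 0)

/-- The Chasles property holds for `E`-valued integrals iff `E` is complete. -/
theorem chaslesProperty_iff_completeSpace (E : Type*) [NormedAddCommGroup E]
    [NormedSpace ℝ E] :
    ChaslesProperty E ↔ CompleteSpace E :=
  ⟨completeSpace_of_chaslesProperty E, fun _ => chaslesProperty_of_completeSpace E⟩
end
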